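/- arXiv:1910.09847 — 10 statements merged into one kernel-verified Lean document; each statement's English description precedes it below -/
import Mathlib

section
/- Let O ⊆ ℝⁿ be strongly star-shaped with respect to x₀, i.e. θ(cl(O) − x₀) + x₀ ⊆ O for all θ ∈ [0,1). Let f ∈ H(L_∂, ℝⁿ) with supp f ⊆ cl(O), and define f_θ(x) := f((x − x₀)/θ + x₀) for θ ∈ (0,1). Then f_θ ∈ H(L_∂, ℝⁿ), L_∂ f_θ = (1/θ)(L_∂ f)_θ, supp f_θ ⊆ O, and f_θ → f in H(L_∂, ℝⁿ) as θ → 1⁻. -/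
open Filter Topology MeasureTheory
open scoped RealInnerProductSpace
open scoped ENNReal NNReal

noncomputable section

/-- A constant matrix acting on a Euclidean vector. -/
def mvec {a b : ℕ} (M : Matrix (Fin a) (Fin b) ℝ) (v : EuclideanSpace ℝ (Fin b)) :
    EuclideanSpace ℝ (Fin a) :=
  (EuclideanSpace.equiv (Fin a) ℝ).symm (M.mulVec (EuclideanSpace.equiv (Fin b) ℝ v))

/-- The formal adjoint differential expression `L_∂ᴴ φ (x) = ∑ i Lᵢᵀ (∂ᵢ φ (x))`. -/
def LdH {n m₁ m₂ : ℕ} (L : Fin n → Matrix (Fin m₁) (Fin m₂) ℝ)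
    (φ : EuclideanSpace ℝ (Fin n) → EuclideanSpace ℝ (Fin m₁))
    (x : EuclideanSpace ℝ (Fin n)) : EuclideanSpace ℝ (Fin m₂) :=
  ∑ i : Fin n, mvec (L i).transpose (fderiv ℝ φ x (EuclideanSpace.single i 1))

/-- `f ∈ H(L_∂, ℝⁿ)` with `L_∂ f = g`: both are square integrable and the weak
differential identity holds against every test function. -/
def HasLd {n m₁ m₂ : ℕ} (L : Fin n → Matrix (Fin m₁) (Fin m₂) ℝ)
    (f : EuclideanSpace ℝ (Fin n) → EuclideanSpace ℝ (Fin m₂))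
    (g : EuclideanSpace ℝ (Fin n) → EuclideanSpace ℝ (Fin m₁)) : Prop :=
  MemLp f 2 volume ∧ MemLp g 2 volume ∧
    ∀ φ : EuclideanSpace ℝ (Fin n) → EuclideanSpace ℝ (Fin m₁),
      ContDiff ℝ (⊤ : ℕ∞) φ → HasCompactSupport φ →
      ∫ x, ⟪g x, φ x⟫ = -∫ x, ⟪f x, LdH L φ x⟫


section Aux

variable {n : ℕ}

abbrev Eucl (n : ℕ) := EuclideanSpace ℝ (Fin n)

/-- Dilation homeomorphism. -/
def dilH (θ : ℝ) (hθ : θ ≠ 0) (x₀ : Eucl n) : Eucl n ≃ₜ Eucl n :=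
  ((Homeomorph.subRight x₀).trans (Homeomorph.smulOfNeZero θ hθ)).trans (Homeomorph.addRight x₀)

lemma dilH_apply (θ : ℝ) (hθ : θ ≠ 0) (x₀ x : Eucl n) :
    dilH θ hθ x₀ x = θ • (x - x₀) + x₀ := rfl

lemma map_dil (x₀ : Eucl n) {θ : ℝ} (hθ : θ ≠ 0) :
    Measure.map (fun x : Eucl n => θ • (x - x₀) + x₀) volume
      = ENNReal.ofReal |(θ ^ n)⁻¹| • volume := by
  have h1 : (fun x : Eucl n => θ • (x - x₀) + x₀)
      = ((· + x₀) ∘ ((θ • ·) ∘ (· + (-x₀)))) := by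
    funext x; simp [sub_eq_add_neg]
  rw [h1, ← Measure.map_map (by fun_prop) (by fun_prop),
    ← Measure.map_map (by fun_prop) (by fun_prop),
    map_add_right_eq_self volume (-x₀), Measure.map_addHaar_smul volume hθ,
    Measure.map_smul, map_add_right_eq_self volume x₀, finrank_euclideanSpace_fin]

lemma qmp_dil (x₀ : Eucl n) {θ : ℝ} (hθ : θ ≠ 0) :
    Measure.QuasiMeasurePreserving (fun x : Eucl n => θ • (x - x₀) + x₀) volume volume := by
  refine ⟨by fun_prop, ?_⟩
  rw [map_dil x₀ hθ]
  exact Measure.smul_absolutelyContinuous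

variable {F : Type*} [NormedAddCommGroup F]

lemma aesm_dil (x₀ : Eucl n) {θ : ℝ} (hθ : θ ≠ 0) {u : Eucl n → F}
    (hu : AEStronglyMeasurable u volume) :
    AEStronglyMeasurable (fun x => u (θ • (x - x₀) + x₀)) volume :=
  hu.comp_quasiMeasurePreserving (qmp_dil x₀ hθ)

lemma eLpNorm_dil (x₀ : Eucl n) {θ : ℝ} (hθ : θ ≠ 0) {u : Eucl n → F}
    (hu : AEStronglyMeasurable u volume) :
    eLpNorm (fun x => u (θ • (x - x₀) + x₀)) 2 volume
      = ENNReal.ofReal |(θ ^ n)⁻¹| ^ ((2:ℝ)⁻¹) * eLpNorm u 2 volume := by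
  have hmap := map_dil (n := n) x₀ hθ
  have hu' : AEStronglyMeasurable u (Measure.map (fun x : Eucl n => θ • (x - x₀) + x₀) volume) := by
    rw [hmap]; exact hu.mono_ac Measure.smul_absolutelyContinuous
  have := eLpNorm_map_measure (p := 2) hu' (qmp_dil x₀ hθ).aemeasurable
  rw [hmap] at this
  rw [show (fun x => u (θ • (x - x₀) + x₀)) = u ∘ (fun x : Eucl n => θ • (x - x₀) + x₀) from rfl,
    ← this, eLpNorm_smul_measure_of_ne_zero (by positivity)]
  norm_num

lemma memLp_dil (x₀ : Eucl n) {θ : ℝ} (hθ : θ ≠ 0) {u : Eucl n → F}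
    (hu : MemLp u 2 volume) :
    MemLp (fun x => u (θ • (x - x₀) + x₀)) 2 volume := by
  refine ⟨aesm_dil x₀ hθ hu.aestronglyMeasurable, ?_⟩
  rw [eLpNorm_dil x₀ hθ hu.aestronglyMeasurable]
  exact ENNReal.mul_lt_top
    (ENNReal.rpow_lt_top_of_nonneg (by norm_num) ENNReal.ofReal_ne_top) hu.2

lemma integral_dil (x₀ : Eucl n) {θ : ℝ} (hθ : θ ≠ 0) {G : Eucl n → ℝ}
    (hG : AEStronglyMeasurable G volume) :
    ∫ x, G (θ • (x - x₀) + x₀) = |(θ ^ n)⁻¹| * ∫ y, G y := by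
  have hmap := map_dil (n := n) x₀ hθ
  have hG' : AEStronglyMeasurable G (Measure.map (fun x : Eucl n => θ • (x - x₀) + x₀) volume) := by
    rw [hmap]; exact hG.mono_ac Measure.smul_absolutelyContinuous
  rw [← integral_map (qmp_dil x₀ hθ).aemeasurable hG', hmap, integral_smul_measure,
    ENNReal.toReal_ofReal (abs_nonneg _), smul_eq_mul]

lemma mvec_smul {a b : ℕ} (M : Matrix (Fin a) (Fin b) ℝ) (c : ℝ) (v : EuclideanSpace ℝ (Fin b)) :
    mvec M (c • v) = c • mvec M v := by
  simp [mvec, Matrix.mulVec_smul]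

lemma continuous_mvec {a b : ℕ} (M : Matrix (Fin a) (Fin b) ℝ) : Continuous (mvec M) := by
  have : Continuous (M.mulVecLin : (Fin b → ℝ) → (Fin a → ℝ)) :=
    LinearMap.continuous_of_finiteDimensional _
  exact ((EuclideanSpace.equiv (Fin a) ℝ).symm.continuous.comp this).comp
    (EuclideanSpace.equiv (Fin b) ℝ).continuous

lemma continuous_LdH {n m₁ m₂ : ℕ} (L : Fin n → Matrix (Fin m₁) (Fin m₂) ℝ)
    {φ : Eucl n → Eucl m₁} (hφ : ContDiff ℝ (⊤ : ℕ∞) φ) : Continuous (LdH L φ) := by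
  refine continuous_finset_sum _ fun i _ => ?_
  exact (continuous_mvec _).comp
    ((ContinuousLinearMap.apply ℝ (Eucl m₁) (EuclideanSpace.single i 1)).continuous.comp
      (hφ.continuous_fderiv (by norm_num)))

lemma LdH_dil {n m₁ m₂ : ℕ} (L : Fin n → Matrix (Fin m₁) (Fin m₂) ℝ)
    {φ : Eucl n → Eucl m₁} (hφ : ContDiff ℝ (⊤ : ℕ∞) φ) (θ : ℝ) (x₀ y : Eucl n) :
    LdH L (fun z => φ (θ • (z - x₀) + x₀)) y = θ • LdH L φ (θ • (y - x₀) + x₀) := by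
  have hS : HasFDerivAt (fun z : Eucl n => θ • (z - x₀) + x₀)
      (θ • ContinuousLinearMap.id ℝ (Eucl n)) y :=
    (((hasFDerivAt_id y).sub_const x₀).const_smul θ).add_const x₀
  have hφd : DifferentiableAt ℝ φ (θ • (y - x₀) + x₀) := (hφ.differentiable (by simp)) _
  have hcomp : HasFDerivAt (fun z => φ (θ • (z - x₀) + x₀))
      ((fderiv ℝ φ (θ • (y - x₀) + x₀)).comp (θ • ContinuousLinearMap.id ℝ (Eucl n))) y :=
    hφd.hasFDerivAt.comp y hS
  unfold LdH
  rw [hcomp.fderiv, Finset.smul_sum]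
  congr 1
  funext i
  rw [ContinuousLinearMap.comp_apply]
  simp only [ContinuousLinearMap.smul_apply, ContinuousLinearMap.id_apply,
    ContinuousLinearMap.map_smul, mvec_smul]

lemma tendsto_dil_cont (x₀ : Eucl n) {h : Eucl n → F}
    (hc : Continuous h) (hcs : HasCompactSupport h) :
    Tendsto (fun θ : ℝ => eLpNorm (fun x => h (θ⁻¹ • (x - x₀) + x₀) - h x) 2 volume)
      (𝓝[<] (1:ℝ)) (𝓝 0) := by
  obtain ⟨r₀, hr₀⟩ := hcs.isBounded.subset_closedBall x₀
  set r := max r₀ 0 with hrdef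
  have hr : tsupport h ⊆ Metric.closedBall x₀ r :=
    hr₀.trans (Metric.closedBall_subset_closedBall (le_max_left _ _))
  obtain ⟨C, hC⟩ := hc.bounded_above_of_compact_support hcs
  have hC0 : 0 ≤ C := le_trans (norm_nonneg (h 0)) (hC 0)
  set K := Metric.closedBall x₀ r with hKdef
  -- vanishing outside K
  have hout : ∀ θ : ℝ, θ ∈ Set.Ioo (0:ℝ) 1 → ∀ x : Eucl n, x ∉ K →
      h (θ⁻¹ • (x - x₀) + x₀) = 0 ∧ h x = 0 := by
    intro θ hθ x hx
    constructor
    · apply image_eq_zero_of_notMem_tsupport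
      intro hmem
      apply hx
      have h1 : θ⁻¹ • (x - x₀) + x₀ ∈ Metric.closedBall x₀ r := hr hmem
      rw [Metric.mem_closedBall, dist_eq_norm] at h1 ⊢
      have h2 : x - x₀ = θ • (θ⁻¹ • (x - x₀) + x₀ - x₀) := by
        rw [add_sub_cancel_right, smul_smul, mul_inv_cancel₀ hθ.1.ne', one_smul]
      rw [h2, norm_smul, Real.norm_eq_abs, abs_of_pos hθ.1]
      calc θ * ‖θ⁻¹ • (x - x₀) + x₀ - x₀‖ ≤ 1 * r := by
            apply mul_le_mul hθ.2.le h1 (norm_nonneg _) zero_le_one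
        _ = r := one_mul r
    · exact image_eq_zero_of_notMem_tsupport (fun hmem => hx (hr hmem))
  have key : Tendsto (fun θ : ℝ => ∫⁻ x, ‖h (θ⁻¹ • (x - x₀) + x₀) - h x‖₊ ^ (2:ℝ) ∂volume)
      (𝓝[<] (1:ℝ)) (𝓝 0) := by
    have hIoo : Set.Ioo (0:ℝ) 1 ∈ 𝓝[<] (1:ℝ) :=
      Ioo_mem_nhdsLT_of_mem (by constructor <;> norm_num)
    have H := tendsto_lintegral_filter_of_dominated_convergence (μ := volume) (l := 𝓝[<] (1:ℝ))
      (F := fun (θ:ℝ) (x : Eucl n) => (‖h (θ⁻¹ • (x - x₀) + x₀) - h x‖₊ : ℝ≥0∞) ^ (2:ℝ))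
      (f := fun _ => (0:ℝ≥0∞))
      (K.indicator fun _ => ENNReal.ofReal (2*C) ^ (2:ℝ)) ?_ ?_ ?_ ?_
    · simpa using H
    · refine Eventually.of_forall fun θ => ?_
      have : Continuous fun x : Eucl n => h (θ⁻¹ • (x - x₀) + x₀) - h x :=
        (hc.comp (by fun_prop)).sub hc
      exact this.nnnorm.measurable.coe_nnreal_ennreal.pow_const _
    · filter_upwards [hIoo] with θ hθ
      refine Eventually.of_forall fun x => ?_
      by_cases hx : x ∈ K
      · rw [Set.indicator_of_mem hx]
        refine ENNReal.rpow_le_rpow ?_ (by norm_num)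
        rw [← ENNReal.ofReal_coe_nnreal]
        refine ENNReal.ofReal_le_ofReal ?_
        calc (‖h (θ⁻¹ • (x - x₀) + x₀) - h x‖₊ : ℝ) = ‖h (θ⁻¹ • (x - x₀) + x₀) - h x‖ := rfl
          _ ≤ ‖h (θ⁻¹ • (x - x₀) + x₀)‖ + ‖h x‖ := norm_sub_le _ _
          _ ≤ C + C := add_le_add (hC _) (hC _)
          _ = 2*C := by ring
      · rw [Set.indicator_of_notMem hx, (hout θ hθ x hx).1, (hout θ hθ x hx).2]
        simp
    · rw [lintegral_indicator measurableSet_closedBall, lintegral_const,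
        Measure.restrict_apply MeasurableSet.univ, Set.univ_inter]
      exact (ENNReal.mul_lt_top
        (ENNReal.rpow_lt_top_of_nonneg (by norm_num) ENNReal.ofReal_ne_top)
        measure_closedBall_lt_top).ne
    · refine Eventually.of_forall fun x => ?_
      have hv : ContinuousAt (fun θ : ℝ => h (θ⁻¹ • (x - x₀) + x₀) - h x) 1 := by
        refine ContinuousAt.sub ?_ continuousAt_const
        refine hc.continuousAt.comp ?_
        refine ContinuousAt.add (ContinuousAt.smul (f := fun θ : ℝ => θ⁻¹) (g := fun _ : ℝ => x - x₀) ?_ continuousAt_const) continuousAt_const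
        exact ContinuousAt.inv₀ continuousAt_id one_ne_zero
      have hcont : ContinuousAt
          (fun θ : ℝ => (‖h (θ⁻¹ • (x - x₀) + x₀) - h x‖₊ : ℝ≥0∞) ^ (2:ℝ)) 1 :=
        (ENNReal.continuous_rpow_const.continuousAt).comp
          ((ENNReal.continuous_coe.continuousAt).comp (continuous_nnnorm.continuousAt.comp hv))
      have h1 : (fun θ : ℝ => (‖h (θ⁻¹ • (x - x₀) + x₀) - h x‖₊ : ℝ≥0∞) ^ (2:ℝ)) 1 = 0 := by
        simp only [inv_one, one_smul, sub_add_cancel, sub_self, nnnorm_zero,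
          ENNReal.coe_zero]
        exact ENNReal.zero_rpow_of_pos (by norm_num)
      have h2 := hcont.tendsto
      rw [show (‖h ((1:ℝ)⁻¹ • (x - x₀) + x₀) - h x‖₊ : ℝ≥0∞) ^ (2:ℝ) = 0 from h1] at h2
      exact h2.mono_left nhdsWithin_le_nhds
  have hrw : ∀ v : Eucl n → F,
      eLpNorm v 2 volume = (∫⁻ x, (‖v x‖₊ : ℝ≥0∞) ^ (2:ℝ) ∂volume) ^ ((2:ℝ)⁻¹) := by
    intro v
    rw [eLpNorm_eq_lintegral_rpow_enorm_toReal (by norm_num) (by norm_num)]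
    norm_num
    rfl
  simp_rw [hrw]
  have := ((ENNReal.continuous_rpow_const (y := (2:ℝ)⁻¹)).continuousAt (x := 0)).tendsto.comp key
  rwa [ENNReal.zero_rpow_of_pos (by norm_num)] at this

lemma tendsto_dil_L2 [NormedSpace ℝ F] (x₀ : Eucl n) {u : Eucl n → F}
    (hu : MemLp u 2 volume) :
    Tendsto (fun θ : ℝ => eLpNorm (fun x => u (θ⁻¹ • (x - x₀) + x₀) - u x) 2 volume)
      (𝓝[<] (1:ℝ)) (𝓝 0) := by
  rw [ENNReal.tendsto_nhds_zero]
  intro ε hε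
  have hε4 : (ε / 4 : ℝ≥0∞) ≠ 0 := by
    simp only [ne_eq, ENNReal.div_eq_zero_iff, hε.ne', false_or]
    norm_num
  obtain ⟨h, h_cs, h_near, h_cont, h_mem⟩ :=
    hu.exists_hasCompactSupport_eLpNorm_sub_le (p := 2) (by norm_num) hε4
  have hB := (ENNReal.tendsto_nhds_zero.mp (tendsto_dil_cont x₀ h_cont h_cs)) (ε / 4)
    (pos_iff_ne_zero.mpr hε4)
  have hIoo : Set.Ioo (0:ℝ) 1 ∈ 𝓝[<] (1:ℝ) :=
    Ioo_mem_nhdsLT_of_mem (by constructor <;> norm_num)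
  filter_upwards [hIoo, hB] with θ hθ hBθ
  have hθ0 : θ ≠ 0 := hθ.1.ne'
  have hθi : θ⁻¹ ≠ 0 := inv_ne_zero hθ0
  -- measurability
  have hum := hu.aestronglyMeasurable
  have hhm : AEStronglyMeasurable h (volume : Measure (Eucl n)) := h_cont.aestronglyMeasurable
  have muh : AEStronglyMeasurable (fun x => u x - h x) volume := hum.sub hhm
  have mA : AEStronglyMeasurable
      (fun x : Eucl n => u (θ⁻¹ • (x - x₀) + x₀) - h (θ⁻¹ • (x - x₀) + x₀)) volume :=
    aesm_dil x₀ hθi muh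
  have mB : AEStronglyMeasurable
      (fun x : Eucl n => h (θ⁻¹ • (x - x₀) + x₀) - h x) volume :=
    (aesm_dil x₀ hθi hhm).sub hhm
  have mC : AEStronglyMeasurable (fun x : Eucl n => h x - u x) volume := hhm.sub hum
  have hsplit : (fun x : Eucl n => u (θ⁻¹ • (x - x₀) + x₀) - u x)
      = (fun x => ((u (θ⁻¹ • (x - x₀) + x₀) - h (θ⁻¹ • (x - x₀) + x₀))
          + (h (θ⁻¹ • (x - x₀) + x₀) - h x)) + (h x - u x)) := by
    funext x; abel
  -- bound for A
  have hAle : eLpNorm (fun x : Eucl n =>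
      u (θ⁻¹ • (x - x₀) + x₀) - h (θ⁻¹ • (x - x₀) + x₀)) 2 volume ≤ ε / 4 := by
    have := eLpNorm_dil (F := F) x₀ hθi (u := fun x => u x - h x) muh
    rw [show (fun x : Eucl n => u (θ⁻¹ • (x - x₀) + x₀) - h (θ⁻¹ • (x - x₀) + x₀))
        = (fun x : Eucl n => (fun y => u y - h y) (θ⁻¹ • (x - x₀) + x₀)) from rfl, this]
    have hc1 : ENNReal.ofReal |((θ⁻¹) ^ n)⁻¹| ^ ((2:ℝ)⁻¹) ≤ 1 := by
      apply ENNReal.rpow_le_one _ (by norm_num)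
      apply ENNReal.ofReal_le_one.mpr
      rw [← inv_pow, inv_inv, abs_of_nonneg (pow_nonneg hθ.1.le n)]
      exact pow_le_one₀ hθ.1.le hθ.2.le
    calc ENNReal.ofReal |((θ⁻¹) ^ n)⁻¹| ^ ((2:ℝ)⁻¹) * eLpNorm (fun y => u y - h y) 2 volume
        ≤ 1 * eLpNorm (fun y => u y - h y) 2 volume := by
          exact mul_le_mul_left hc1 _
      _ = eLpNorm (u - h) 2 volume := by rw [one_mul]; rfl
      _ ≤ ε / 4 := h_near
  have hCle : eLpNorm (fun x : Eucl n => h x - u x) 2 volume ≤ ε / 4 := by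
    have : (fun x : Eucl n => h x - u x) = -(u - h) := by funext x; simp
    rw [this, eLpNorm_neg]
    exact h_near
  calc eLpNorm (fun x : Eucl n => u (θ⁻¹ • (x - x₀) + x₀) - u x) 2 volume
      ≤ eLpNorm (fun x : Eucl n => (u (θ⁻¹ • (x - x₀) + x₀) - h (θ⁻¹ • (x - x₀) + x₀))
          + (h (θ⁻¹ • (x - x₀) + x₀) - h x)) 2 volume
        + eLpNorm (fun x : Eucl n => h x - u x) 2 volume := by
        rw [hsplit]
        exact eLpNorm_add_le (mA.add mB) mC one_le_two
    _ ≤ (eLpNorm (fun x : Eucl n => u (θ⁻¹ • (x - x₀) + x₀) - h (θ⁻¹ • (x - x₀) + x₀)) 2 volume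
          + eLpNorm (fun x : Eucl n => h (θ⁻¹ • (x - x₀) + x₀) - h x) 2 volume)
        + eLpNorm (fun x : Eucl n => h x - u x) 2 volume :=
        add_le_add_left (eLpNorm_add_le mA mB one_le_two) _
    _ ≤ (ε / 4 + ε / 4) + ε / 4 := add_le_add (add_le_add hAle hBθ) hCle
    _ ≤ ε := by
        calc ε / 4 + ε / 4 + ε / 4 = 3 * (ε / 4) := by ring
          _ ≤ 4 * (ε / 4) := mul_le_mul_left (by norm_num) _
          _ = ε := by
              rw [mul_comm, ENNReal.div_mul_cancel (by norm_num) (by norm_num)]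


end Aux

/-- Dilation of an element of `H(L_∂, ℝⁿ)` supported in the closure of a
strongly star-shaped set: `f_θ ∈ H(L_∂, ℝⁿ)` with `L_∂ f_θ = (1/θ)(L_∂ f)_θ`,
`supp f_θ ⊆ O`, and `f_θ → f` in the graph norm as `θ → 1⁻`. -/
theorem stmt3 {n m₁ m₂ : ℕ} (L : Fin n → Matrix (Fin m₁) (Fin m₂) ℝ)
    (O : Set (EuclideanSpace ℝ (Fin n))) (x₀ : EuclideanSpace ℝ (Fin n))
    (hO : ∀ θ : ℝ, θ ∈ Set.Ico (0 : ℝ) 1 → ∀ x ∈ closure O, θ • (x - x₀) + x₀ ∈ O)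
    (f : EuclideanSpace ℝ (Fin n) → EuclideanSpace ℝ (Fin m₂))
    (g : EuclideanSpace ℝ (Fin n) → EuclideanSpace ℝ (Fin m₁))
    (hfg : HasLd L f g) (hsupp : tsupport f ⊆ closure O) :
    (∀ θ : ℝ, θ ∈ Set.Ioo (0 : ℝ) 1 →
      HasLd L (fun x => f (θ⁻¹ • (x - x₀) + x₀)) (fun x => θ⁻¹ • g (θ⁻¹ • (x - x₀) + x₀)) ∧
      tsupport (fun x => f (θ⁻¹ • (x - x₀) + x₀)) ⊆ O) ∧
    Tendsto (fun θ : ℝ =>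
        eLpNorm (fun x => f (θ⁻¹ • (x - x₀) + x₀) - f x) 2 volume) (𝓝[<] 1) (𝓝 0) ∧
    Tendsto (fun θ : ℝ =>
        eLpNorm (fun x => θ⁻¹ • g (θ⁻¹ • (x - x₀) + x₀) - g x) 2 volume) (𝓝[<] 1) (𝓝 0) := by
  obtain ⟨hfL2, hgL2, hweak⟩ := hfg
  refine ⟨?_, ?_, ?_⟩
  · intro θ hθ
    have hθ0 : θ ≠ 0 := hθ.1.ne'
    have hθi : θ⁻¹ ≠ 0 := inv_ne_zero hθ0
    have hST : ∀ x : EuclideanSpace ℝ (Fin n),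
        θ • ((θ⁻¹ • (x - x₀) + x₀) - x₀) + x₀ = x := by
      intro x
      rw [add_sub_cancel_right, smul_smul, mul_inv_cancel₀ hθ0, one_smul, sub_add_cancel]
    constructor
    · refine ⟨memLp_dil x₀ hθi hfL2, (memLp_dil x₀ hθi hgL2).const_smul θ⁻¹, ?_⟩
      intro φ hφ hφc
      have hSsm : ContDiff ℝ (⊤ : ℕ∞) (fun y : EuclideanSpace ℝ (Fin n) => θ • (y - x₀) + x₀) :=
        ((contDiff_id.sub contDiff_const).const_smul θ).add contDiff_const
      have hψsm : ContDiff ℝ (⊤ : ℕ∞) (fun y => φ (θ • (y - x₀) + x₀)) := hφ.comp hSsm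
      have hψcs : HasCompactSupport (fun y => φ (θ • (y - x₀) + x₀)) :=
        hφc.comp_isClosedEmbedding (dilH θ hθ0 x₀).isClosedEmbedding
      have hψ := hweak (fun y => φ (θ • (y - x₀) + x₀)) hψsm hψcs
      have hLd : ∀ y, LdH L (fun z => φ (θ • (z - x₀) + x₀)) y
          = θ • LdH L φ (θ • (y - x₀) + x₀) := fun y => LdH_dil L hφ θ x₀ y
      have hφcont : Continuous φ := hφ.continuous
      have hLφcont : Continuous (LdH L φ) := continuous_LdH L hφ
      have hgm : AEStronglyMeasurable g (volume : Measure (Eucl n)) := hgL2.aestronglyMeasurable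
      have hfm : AEStronglyMeasurable f (volume : Measure (Eucl n)) := hfL2.aestronglyMeasurable
      have hFg : AEStronglyMeasurable
          (fun y : Eucl n => ⟪θ⁻¹ • g y, φ (θ • (y - x₀) + x₀)⟫) volume :=
        AEStronglyMeasurable.inner (hgm.const_smul θ⁻¹)
          ((hφcont.comp (by fun_prop)).aestronglyMeasurable)
      have hFf : AEStronglyMeasurable
          (fun y : Eucl n => ⟪f y, LdH L φ (θ • (y - x₀) + x₀)⟫) volume :=
        AEStronglyMeasurable.inner hfm
          ((hLφcont.comp (by fun_prop)).aestronglyMeasurable)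
      have e1 : ∫ x, ⟪θ⁻¹ • g (θ⁻¹ • (x - x₀) + x₀), φ x⟫
          = |((θ⁻¹) ^ n)⁻¹| * ∫ y, ⟪θ⁻¹ • g y, φ (θ • (y - x₀) + x₀)⟫ := by
        rw [← integral_dil x₀ hθi hFg]
        congr 1
        funext x
        rw [hST x]
      have e2 : ∫ x, ⟪f (θ⁻¹ • (x - x₀) + x₀), LdH L φ x⟫
          = |((θ⁻¹) ^ n)⁻¹| * ∫ y, ⟪f y, LdH L φ (θ • (y - x₀) + x₀)⟫ := by
        rw [← integral_dil x₀ hθi hFf]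
        congr 1
        funext x
        rw [hST x]
      have e3 : ∫ y, ⟪θ⁻¹ • g y, φ (θ • (y - x₀) + x₀)⟫
          = θ⁻¹ * ∫ y, ⟪g y, φ (θ • (y - x₀) + x₀)⟫ := by
        simp_rw [real_inner_smul_left]
        exact integral_const_mul _ _
      have e4 : ∫ y, ⟪f y, LdH L φ (θ • (y - x₀) + x₀)⟫
          = θ⁻¹ * ∫ y, ⟪f y, LdH L (fun z => φ (θ • (z - x₀) + x₀)) y⟫ := by
        rw [← integral_const_mul]
        congr 1
        funext y
        rw [hLd y, real_inner_smul_right, ← mul_assoc, inv_mul_cancel₀ hθ0, one_mul]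
      rw [e1, e2, e3, e4, hψ]
      ring
    · intro x hx
      have hclosed : IsClosed ((dilH θ hθ0 x₀) '' tsupport f) :=
        (dilH θ hθ0 x₀).isClosedMap _ (isClosed_tsupport f)
      have hsub : tsupport (fun x => f (θ⁻¹ • (x - x₀) + x₀))
          ⊆ (dilH θ hθ0 x₀) '' tsupport f := by
        apply closure_minimal _ hclosed
        intro z hz
        exact ⟨θ⁻¹ • (z - x₀) + x₀, subset_closure hz, hST z⟩
      obtain ⟨y, hy, rfl⟩ := hsub hx
      exact hO θ ⟨hθ.1.le, hθ.2⟩ y (hsupp hy)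
  · exact tendsto_dil_L2 x₀ hfL2
  · have hgm : AEStronglyMeasurable g (volume : Measure (Eucl n)) := hgL2.aestronglyMeasurable
    have hmain := tendsto_dil_L2 x₀ hgL2
    have hcoef : Tendsto (fun θ : ℝ => (‖θ⁻¹ - 1‖₊ : ℝ≥0∞) * eLpNorm g 2 volume)
        (𝓝[<] (1:ℝ)) (𝓝 0) := by
      have h1 : Tendsto (fun θ : ℝ => (‖θ⁻¹ - 1‖₊ : ℝ≥0∞)) (𝓝[<] (1:ℝ)) (𝓝 0) := by
        have hc : ContinuousAt (fun θ : ℝ => (‖θ⁻¹ - 1‖₊ : ℝ≥0∞)) 1 := by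
          refine ENNReal.continuous_coe.continuousAt.comp ?_
          exact continuous_nnnorm.continuousAt.comp
            ((ContinuousAt.inv₀ continuousAt_id one_ne_zero).sub continuousAt_const)
        have := hc.tendsto
        simp only [inv_one, sub_self, nnnorm_zero, ENNReal.coe_zero] at this
        exact this.mono_left nhdsWithin_le_nhds
      have := ENNReal.Tendsto.mul_const h1 (Or.inr hgL2.2.ne)
      rwa [zero_mul] at this
    have hsum : Tendsto (fun θ : ℝ => (‖θ⁻¹ - 1‖₊ : ℝ≥0∞) * eLpNorm g 2 volume
        + eLpNorm (fun x => g (θ⁻¹ • (x - x₀) + x₀) - g x) 2 volume)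
        (𝓝[<] (1:ℝ)) (𝓝 0) := by
      have := hcoef.add hmain
      rwa [add_zero] at this
    have hIoo : Set.Ioo (0:ℝ) 1 ∈ 𝓝[<] (1:ℝ) :=
      Ioo_mem_nhdsLT_of_mem (by constructor <;> norm_num)
    refine tendsto_of_tendsto_of_tendsto_of_le_of_le' tendsto_const_nhds hsum
      (Eventually.of_forall fun θ => zero_le) ?_
    filter_upwards [hIoo] with θ hθ
    have hθ0 : θ ≠ 0 := hθ.1.ne'
    have hθi : θ⁻¹ ≠ 0 := inv_ne_zero hθ0
    have mGT : AEStronglyMeasurable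
        (fun x : Eucl n => g (θ⁻¹ • (x - x₀) + x₀)) volume := aesm_dil x₀ hθi hgm
    have hsplit : (fun x : Eucl n => θ⁻¹ • g (θ⁻¹ • (x - x₀) + x₀) - g x)
        = (fun x => (θ⁻¹ - 1) • g (θ⁻¹ • (x - x₀) + x₀)
            + (g (θ⁻¹ • (x - x₀) + x₀) - g x)) := by
      funext x
      rw [sub_smul, one_smul]
      abel
    calc eLpNorm (fun x : Eucl n => θ⁻¹ • g (θ⁻¹ • (x - x₀) + x₀) - g x) 2 volume
        ≤ eLpNorm (fun x : Eucl n => (θ⁻¹ - 1) • g (θ⁻¹ • (x - x₀) + x₀)) 2 volume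
          + eLpNorm (fun x : Eucl n => g (θ⁻¹ • (x - x₀) + x₀) - g x) 2 volume := by
          rw [hsplit]
          exact eLpNorm_add_le (mGT.const_smul (θ⁻¹ - 1)) (mGT.sub hgm) one_le_two
      _ ≤ (‖θ⁻¹ - 1‖₊ : ℝ≥0∞) * eLpNorm g 2 volume
          + eLpNorm (fun x : Eucl n => g (θ⁻¹ • (x - x₀) + x₀) - g x) 2 volume := by
          refine add_le_add_left ?_ _
          have h1 : eLpNorm (fun x : Eucl n => (θ⁻¹ - 1) • g (θ⁻¹ • (x - x₀) + x₀)) 2 volume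
              = (‖θ⁻¹ - 1‖₊ : ℝ≥0∞)
                * eLpNorm (fun x : Eucl n => g (θ⁻¹ • (x - x₀) + x₀)) 2 volume :=
            eLpNorm_const_smul (θ⁻¹ - 1) (fun x : Eucl n => g (θ⁻¹ • (x - x₀) + x₀)) 2 volume
          rw [h1]
          refine mul_le_mul_right ?_ _
          rw [eLpNorm_dil x₀ hθi hgm]
          have hc1 : ENNReal.ofReal |((θ⁻¹) ^ n)⁻¹| ^ ((2:ℝ)⁻¹) ≤ 1 := by
            apply ENNReal.rpow_le_one _ (by norm_num)
            apply ENNReal.ofReal_le_one.mpr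
            rw [← inv_pow, inv_inv, abs_of_nonneg (pow_nonneg hθ.1.le n)]
            exact pow_le_one₀ hθ.1.le hθ.2.le
          calc ENNReal.ofReal |((θ⁻¹) ^ n)⁻¹| ^ ((2:ℝ)⁻¹) * eLpNorm g 2 volume
              ≤ 1 * eLpNorm g 2 volume := mul_le_mul_left hc1 _
            _ = eLpNorm g 2 volume := one_mul _
end
end

section
/- Let ι₊ : D̃₊ ⊆ H₊ → H₀ be the (densely defined) identity embedding, where D̃₊ is dense in both the Hilbert spaces H₊ (w.r.t. ‖·‖₊) and H₀ (w.r.t. ‖·‖₀). Then the adjoint relation ι₊* is single-valued with trivial kernel, its domain equals D₋ := {g ∈ H₀ : sup_{f∈D̃₊} |⟨g,f⟩₀|/‖f‖₊ < ∞}, and ι₊* : D₋ → H₊ is isometric with respect to ‖·‖₋. -/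
open Filter Topology
open scoped ComplexInnerProductSpace

noncomputable section

/-- `(u, v)` belongs to the adjoint relation of the (identity) embedding
`ι₊ : D̃₊ ⊆ H₊ → H₀`, i.e. `⟨u, ι₊ f⟩₀ = ⟨v, f⟩₊` for all `f` in the domain. -/
def InAdjRel {Hp H₀ : Type*}
    [NormedAddCommGroup Hp] [InnerProductSpace ℂ Hp]
    [NormedAddCommGroup H₀] [InnerProductSpace ℂ H₀]
    (T : Hp →ₗ.[ℂ] H₀) (u : H₀) (v : Hp) : Prop :=
  ∀ f : T.domain, ⟪u, T f⟫ = ⟪v, (f : Hp)⟫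

/-!
Density of `D̃₊` in `H₊` makes `v` unique, density in `H₀` makes `u` unique, and the Riesz
representation theorem produces `v` as soon as `f ↦ ⟨u, f⟩₀` is `‖·‖₊`-bounded on `D̃₊`.
A bound `|⟨v, f⟩₊| ≤ C ‖f‖₊` on the dense set `D̃₊` extends by continuity to all of `H₊`, so
it bounds the norm `‖v‖` of `⟨v, ·⟩₊`; hence `‖v‖` is the least such `C`, i.e. `‖u‖₋ = ‖v‖₊`.
-/

theorem norm_le_of_dense_of_norm_inner_le {𝕜 E : Type*} [RCLike 𝕜]
    [NormedAddCommGroup E] [InnerProductSpace 𝕜 E] {S : Set E} {v : E} {C : ℝ}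
    (hS : Dense S) (hC : 0 ≤ C) (h : ∀ x ∈ S, ‖inner 𝕜 v x‖ ≤ C * ‖x‖) : ‖v‖ ≤ C := by
  rw [← innerSL_apply_norm 𝕜]
  refine ContinuousLinearMap.opNorm_le_bound _ hC fun x => hS.induction h ?_ x
  exact isClosed_le (continuous_const.inner continuous_id).norm
    (continuous_const.mul continuous_norm)

section

variable {Hp H₀ : Type*} [NormedAddCommGroup Hp] [InnerProductSpace ℂ Hp]
  [NormedAddCommGroup H₀] [InnerProductSpace ℂ H₀] {T : Hp →ₗ.[ℂ] H₀} {u : H₀} {v : Hp}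

namespace InAdjRel

theorem eq_zero_of_left_eq_zero (hdom : Dense (T.domain : Set Hp)) (h : InAdjRel T 0 v) :
    v = 0 :=
  hdom.eq_zero_of_inner_left ℂ fun f hf => by rw [← h ⟨f, hf⟩, inner_zero_left]

theorem eq_zero_of_right_eq_zero (hran : Dense (Set.range fun f : T.domain => T f))
    (h : InAdjRel T u 0) : u = 0 :=
  DenseRange.eq_of_inner_left ℂ hran fun f => by rw [h f, inner_zero_left, inner_zero_left]

theorem norm_inner_le (h : InAdjRel T u v) (f : T.domain) :
    ‖⟪u, T f⟫‖ ≤ ‖v‖ * ‖(f : Hp)‖ := by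
  rw [h f]
  exact norm_inner_le_norm (𝕜 := ℂ) v f

theorem isLeast_norm (hdom : Dense (T.domain : Set Hp)) (h : InAdjRel T u v) :
    IsLeast {C : ℝ | 0 ≤ C ∧ ∀ f : T.domain, ‖⟪u, T f⟫‖ ≤ C * ‖(f : Hp)‖} ‖v‖ := by
  refine ⟨⟨norm_nonneg v, h.norm_inner_le⟩, fun C ⟨hC, hbound⟩ => ?_⟩
  refine norm_le_of_dense_of_norm_inner_le (𝕜 := ℂ) hdom hC fun f hf => ?_
  rw [← h ⟨f, hf⟩]
  exact hbound ⟨f, hf⟩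

end InAdjRel

theorem exists_inAdjRel_of_bound [CompleteSpace Hp] (hdom : Dense (T.domain : Set Hp))
    {C : ℝ} (hbound : ∀ f : T.domain, ‖⟪u, T f⟫‖ ≤ C * ‖(f : Hp)‖) :
    ∃ v : Hp, InAdjRel T u v := by
  have hu : u ∈ T.adjointDomain :=
    AddMonoidHomClass.continuous_of_bound ((innerₛₗ ℂ u).comp T.toFun) C hbound
  exact ⟨LinearPMap.adjointAux hdom ⟨u, hu⟩, fun f =>
    (LinearPMap.adjointAux_inner hdom ⟨u, hu⟩ f).symm⟩

end

theorem stmt7_general {Hp H₀ : Type*}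
    [NormedAddCommGroup Hp] [InnerProductSpace ℂ Hp] [CompleteSpace Hp]
    [NormedAddCommGroup H₀] [InnerProductSpace ℂ H₀]
    (T : Hp →ₗ.[ℂ] H₀)
    (hdom : Dense (T.domain : Set Hp))
    (hran : Dense (Set.range fun f : T.domain => T f)) :
    -- `ι₊*` is single-valued:
    (∀ v : Hp, InAdjRel T 0 v → v = 0) ∧
    -- `ker ι₊* = {0}`:
    (∀ u : H₀, InAdjRel T u 0 → u = 0) ∧
    -- `dom ι₊* = D₋`:
    (∀ u : H₀, (∃ v : Hp, InAdjRel T u v) ↔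
      ∃ C : ℝ, 0 ≤ C ∧ ∀ f : T.domain, ‖⟪u, T f⟫‖ ≤ C * ‖(f : Hp)‖) ∧
    -- `ι₊*` is isometric w.r.t. `‖·‖₋`:
    (∀ (u : H₀) (v : Hp), InAdjRel T u v →
      ‖v‖ = sInf {C : ℝ | 0 ≤ C ∧ ∀ f : T.domain, ‖⟪u, T f⟫‖ ≤ C * ‖(f : Hp)‖}) := by
  refine ⟨fun v => InAdjRel.eq_zero_of_left_eq_zero hdom,
    fun u => InAdjRel.eq_zero_of_right_eq_zero hran, fun u => ⟨?_, ?_⟩,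
    fun u v h => (h.isLeast_norm hdom).csInf_eq.symm⟩
  · rintro ⟨v, h⟩
    exact ⟨‖v‖, (h.isLeast_norm hdom).1⟩
  · rintro ⟨C, -, hbound⟩
    exact exists_inAdjRel_of_bound hdom hbound

/-- For the densely defined identity embedding `ι₊ : D̃₊ ⊆ H₊ → H₀` (with
`D̃₊` dense in both `H₊` and `H₀`), the adjoint relation `ι₊*` is single-valued with trivial
kernel, its domain is exactly `D₋ = {g : sup_f |⟨g,f⟩₀|/‖f‖₊ < ∞}`, and `ι₊* : D₋ → H₊` is
isometric with respect to `‖·‖₋`. -/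
theorem stmt7 {Hp H₀ : Type*}
    [NormedAddCommGroup Hp] [InnerProductSpace ℂ Hp] [CompleteSpace Hp]
    [NormedAddCommGroup H₀] [InnerProductSpace ℂ H₀] [CompleteSpace H₀]
    (T : Hp →ₗ.[ℂ] H₀)
    (hdom : Dense (T.domain : Set Hp))
    (hran : Dense (Set.range fun f : T.domain => T f)) :
    -- `ι₊*` is single-valued:
    (∀ v : Hp, InAdjRel T 0 v → v = 0) ∧
    -- `ker ι₊* = {0}`:
    (∀ u : H₀, InAdjRel T u 0 → u = 0) ∧
    -- `dom ι₊* = D₋`: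
    (∀ u : H₀, (∃ v : Hp, InAdjRel T u v) ↔
      ∃ C : ℝ, 0 ≤ C ∧ ∀ f : T.domain, ‖⟪u, T f⟫‖ ≤ C * ‖(f : Hp)‖) ∧
    -- `ι₊*` is isometric w.r.t. `‖·‖₋`:
    (∀ (u : H₀) (v : Hp), InAdjRel T u v →
      ‖v‖ = sInf {C : ℝ | 0 ≤ C ∧ ∀ f : T.domain, ‖⟪u, T f⟫‖ ≤ C * ‖(f : Hp)‖}) :=
  stmt7_general T hdom hran
end
end

section
/- With the notation of a pre-quasi-Gelfand setting (H₀ a Hilbert space, D̃₊ dense in H₀ with another inner product ⟨·,·⟩₊, H₊ the ‖·‖₊-completion of D̃₊, ι₊ the embedding D̃₊ ⊆ H₊ → H₀), the following are equivalent: (ii) if a sequence fₙ ∈ D̃₊ satisfies fₙ → 0 in ‖·‖₊ and converges in ‖·‖₀ then the ‖·‖₀-limit is 0, and symmetrically with the roles of the two norms exchanged; (iii) ι₊ is closable and its closure is injective; (iv) D₋ is dense in H₀ and dense in the dual H₊′. -/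
/-!
In the Hilbert sum `H₊ ⊕ H₀` the orthogonal complement of the graph `G` of `ι₊` is the rotated
adjoint relation, so the closure of `G` is its double adjoint `G⊥⊥`. Hence `(0, y) ∈ closure G`
exactly when `y` is orthogonal to the first projection `D₋` of the adjoint relation, and
`(x, 0) ∈ closure G` exactly when `x` is orthogonal to its second projection; the closure is the
graph of an injective operator iff both projections are dense. Sequences in `D̃₊` reach every point
of the closure of `G`, which gives the equivalence with the sequential condition.
-/

open Filter Topology
open scoped ComplexInnerProductSpace

noncomputable section

namespace Submodule

variable {𝕜 E F : Type*} [RCLike 𝕜]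
  [NormedAddCommGroup E] [InnerProductSpace 𝕜 E] [CompleteSpace E]
  [NormedAddCommGroup F] [InnerProductSpace 𝕜 F] [CompleteSpace F]

theorem adjoint_adjoint (g : Submodule 𝕜 (E × F)) :
    g.adjoint.adjoint = g.topologicalClosure := by
  let G : Submodule 𝕜 (WithLp 2 (E × F)) := g.comap (WithLp.linearEquiv 2 𝕜 (E × F)).toLinearMap
  have mem_adjoint (a : F) (b : E) : (a, b) ∈ g.adjoint ↔ WithLp.toLp 2 (-b, a) ∈ Gᗮ := by
    simp only [mem_adjoint_iff, mem_orthogonal, G, mem_comap, WithLp.prod_inner_apply,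
      WithLp.ofLp_fst, WithLp.ofLp_snd, inner_neg_right]
    constructor
    · intro h u hu
      linear_combination h u.fst u.snd hu
    · intro h c d hcd
      have := h (WithLp.toLp 2 (c, d)) hcd
      simp only [WithLp.toLp_fst, WithLp.toLp_snd] at this
      linear_combination this
  ext p
  have hclosure : p ∈ g.topologicalClosure ↔ WithLp.toLp 2 p ∈ Gᗮᗮ := by
    rw [orthogonal_orthogonal_eq_closure, ← SetLike.mem_coe, topologicalClosure_coe,
      ← SetLike.mem_coe, topologicalClosure_coe]
    exact (Set.ext_iff.1 ((WithLp.homeomorphProd 2 E F).preimage_closure g) (WithLp.toLp 2 p))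
  rw [hclosure, mem_adjoint_iff, mem_orthogonal]
  constructor
  · intro h u hu
    have := h u.snd (-u.fst) ((mem_adjoint _ _).2 (by rwa [neg_neg]))
    simp only [inner_neg_left, WithLp.prod_inner_apply, WithLp.ofLp_fst, WithLp.ofLp_snd] at this ⊢
    linear_combination -this
  · intro h a b hab
    have := h _ ((mem_adjoint _ _).1 hab)
    simp only [inner_neg_left, WithLp.prod_inner_apply] at this
    linear_combination -this

theorem zero_prod_mem_closure_iff (g : Submodule 𝕜 (E × F)) (y : F) :
    ((0 : E), y) ∈ closure (g : Set (E × F)) ↔ y ∈ (g.adjoint.map (LinearMap.fst 𝕜 F E))ᗮ := by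
  rw [← topologicalClosure_coe, ← adjoint_adjoint, SetLike.mem_coe, mem_adjoint_iff,
    mem_orthogonal]
  simp

theorem prod_zero_mem_closure_iff (g : Submodule 𝕜 (E × F)) (x : E) :
    (x, (0 : F)) ∈ closure (g : Set (E × F)) ↔ x ∈ (g.adjoint.map (LinearMap.snd 𝕜 F E))ᗮ := by
  rw [← topologicalClosure_coe, ← adjoint_adjoint, SetLike.mem_coe, mem_adjoint_iff,
    mem_orthogonal]
  simp only [mem_adjoint_iff, inner_zero_right, sub_zero, mem_map, LinearMap.snd_apply,
    Prod.exists, exists_eq_right, forall_exists_index]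
  exact forall_comm

theorem forall_mem_orthogonal_eq_zero_iff_dense (K : Submodule 𝕜 E) :
    (∀ x ∈ Kᗮ, x = 0) ↔ Dense (K : Set E) := by
  rw [dense_iff_topologicalClosure_eq_top, topologicalClosure_eq_top_iff, Submodule.eq_bot_iff]

theorem forall_zero_prod_mem_closure_iff_dense_map_fst_adjoint (g : Submodule 𝕜 (E × F)) :
    (∀ y : F, ((0 : E), y) ∈ closure (g : Set (E × F)) → y = 0) ↔
      Dense (g.adjoint.map (LinearMap.fst 𝕜 F E) : Set F) := by
  simp only [zero_prod_mem_closure_iff]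
  exact forall_mem_orthogonal_eq_zero_iff_dense _

theorem forall_prod_zero_mem_closure_iff_dense_map_snd_adjoint (g : Submodule 𝕜 (E × F)) :
    (∀ x : E, (x, (0 : F)) ∈ closure (g : Set (E × F)) → x = 0) ↔
      Dense (g.adjoint.map (LinearMap.snd 𝕜 F E) : Set E) := by
  simp only [prod_zero_mem_closure_iff]
  exact forall_mem_orthogonal_eq_zero_iff_dense _

end Submodule

namespace LinearPMap

variable {R E F : Type*} [Ring R] [AddCommGroup E] [Module R E] [AddCommGroup F] [Module R F]
  [TopologicalSpace E] [TopologicalSpace F] [FrechetUrysohnSpace (E × F)] (T : E →ₗ.[R] F)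

theorem mem_closure_graph_iff_seq (p : E × F) :
    p ∈ _root_.closure (T.graph : Set (E × F)) ↔ ∃ fs : ℕ → T.domain,
      Tendsto (fun k => (fs k : E)) atTop (𝓝 p.1) ∧ Tendsto (fun k => T (fs k)) atTop (𝓝 p.2) := by
  rw [mem_closure_iff_seq_limit]
  constructor
  · rintro ⟨q, hq, hlim⟩
    choose fs hfst hsnd using fun k => T.mem_graph_iff.1 (hq k)
    rw [Prod.tendsto_iff] at hlim
    exact ⟨fs, by simpa [hfst] using hlim.1, by simpa [hsnd] using hlim.2⟩
  · rintro ⟨fs, hfst, hsnd⟩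
    exact ⟨fun k => ((fs k : E), T (fs k)), fun k => T.mem_graph (fs k), hfst.prodMk_nhds hsnd⟩

theorem forall_zero_prod_mem_closure_graph_iff_seq :
    (∀ y : F, ((0 : E), y) ∈ _root_.closure (T.graph : Set (E × F)) → y = 0) ↔
      ∀ (fs : ℕ → T.domain) (y : F), Tendsto (fun k => (fs k : E)) atTop (𝓝 0) →
        Tendsto (fun k => T (fs k)) atTop (𝓝 y) → y = 0 := by
  simp only [mem_closure_graph_iff_seq, forall_exists_index, and_imp]
  exact forall_comm

theorem forall_prod_zero_mem_closure_graph_iff_seq :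
    (∀ x : E, (x, (0 : F)) ∈ _root_.closure (T.graph : Set (E × F)) → x = 0) ↔
      ∀ (fs : ℕ → T.domain) (x : E), Tendsto (fun k => T (fs k)) atTop (𝓝 0) →
        Tendsto (fun k => (fs k : E)) atTop (𝓝 x) → x = 0 := by
  simp only [mem_closure_graph_iff_seq, forall_exists_index, and_imp]
  exact forall_comm.trans (forall₂_congr fun _ _ => imp.swap)

end LinearPMap

section

variable {Hp H₀ : Type*} [NormedAddCommGroup Hp] [InnerProductSpace ℂ Hp]
  [NormedAddCommGroup H₀] [InnerProductSpace ℂ H₀] {T : Hp →ₗ.[ℂ] H₀}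

theorem inAdjRel_iff_mem_adjoint_graph {u : H₀} {v : Hp} :
    InAdjRel T u v ↔ (u, v) ∈ T.graph.adjoint := by
  simp only [InAdjRel, Submodule.mem_adjoint_iff, LinearPMap.mem_graph_iff, sub_eq_zero,
    forall_exists_index, and_imp, forall_apply_eq_imp_iff₂]
  rw [forall_comm]
  simp only [forall_eq']
  refine forall_congr' fun f => ?_
  rw [← inner_conj_symm u, ← inner_conj_symm v, (starRingEnd ℂ).injective.eq_iff]

theorem setOf_exists_inAdjRel_eq_map_fst :
    {u : H₀ | ∃ v : Hp, InAdjRel T u v} = T.graph.adjoint.map (LinearMap.fst ℂ H₀ Hp) := by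
  ext u
  simp [inAdjRel_iff_mem_adjoint_graph]

theorem setOf_exists_inAdjRel_eq_map_snd :
    {v : Hp | ∃ u : H₀, InAdjRel T u v} = T.graph.adjoint.map (LinearMap.snd ℂ H₀ Hp) := by
  ext v
  simp [inAdjRel_iff_mem_adjoint_graph]

end

theorem stmt8_general {Hp H₀ : Type*}
    [NormedAddCommGroup Hp] [InnerProductSpace ℂ Hp] [CompleteSpace Hp]
    [NormedAddCommGroup H₀] [InnerProductSpace ℂ H₀] [CompleteSpace H₀]
    (T : Hp →ₗ.[ℂ] H₀) :
    -- (ii) ↔ (iii):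
    ((((∀ (fs : ℕ → T.domain) (y : H₀),
          Tendsto (fun k => ((fs k : Hp))) atTop (𝓝 0) →
          Tendsto (fun k => T (fs k)) atTop (𝓝 y) → y = 0) ∧
        (∀ (fs : ℕ → T.domain) (x : Hp),
          Tendsto (fun k => T (fs k)) atTop (𝓝 0) →
          Tendsto (fun k => ((fs k : Hp))) atTop (𝓝 x) → x = 0))) ↔
      ((∀ y : H₀, ((0 : Hp), y) ∈ closure {p : Hp × H₀ | ∃ f : T.domain,
          (f : Hp) = p.1 ∧ T f = p.2} → y = 0) ∧
        (∀ x : Hp, (x, (0 : H₀)) ∈ closure {p : Hp × H₀ | ∃ f : T.domain,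
          (f : Hp) = p.1 ∧ T f = p.2} → x = 0))) ∧
    -- (iii) ↔ (iv):
    (((∀ y : H₀, ((0 : Hp), y) ∈ closure {p : Hp × H₀ | ∃ f : T.domain,
          (f : Hp) = p.1 ∧ T f = p.2} → y = 0) ∧
        (∀ x : Hp, (x, (0 : H₀)) ∈ closure {p : Hp × H₀ | ∃ f : T.domain,
          (f : Hp) = p.1 ∧ T f = p.2} → x = 0)) ↔
      (Dense {u : H₀ | ∃ v : Hp, InAdjRel T u v} ∧
        Dense {v : Hp | ∃ u : H₀, InAdjRel T u v})) := by
  have hgraph : {p : Hp × H₀ | ∃ f : T.domain, (f : Hp) = p.1 ∧ T f = p.2} = T.graph :=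
    Set.ext fun p => T.mem_graph_iff.symm
  rw [hgraph, setOf_exists_inAdjRel_eq_map_fst, setOf_exists_inAdjRel_eq_map_snd]
  exact ⟨(T.forall_zero_prod_mem_closure_graph_iff_seq.and
      T.forall_prod_zero_mem_closure_graph_iff_seq).symm,
    T.graph.forall_zero_prod_mem_closure_iff_dense_map_fst_adjoint.and
      T.graph.forall_prod_zero_mem_closure_iff_dense_map_snd_adjoint⟩

/-- In the pre-quasi-Gelfand setting, with `ι₊ : D̃₊ ⊆ H₊ → H₀` the
embedding (dense domain and dense range), the following are equivalent:
(ii) mixed limits of sequences in `D̃₊` are compatible;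
(iii) `ι₊` is closable and its closure is injective;
(iv) `D₋` is dense in `H₀` and (via the Riesz identification `ι₊*`) dense in `H₊′`. -/
theorem stmt8 {Hp H₀ : Type*}
    [NormedAddCommGroup Hp] [InnerProductSpace ℂ Hp] [CompleteSpace Hp]
    [NormedAddCommGroup H₀] [InnerProductSpace ℂ H₀] [CompleteSpace H₀]
    (T : Hp →ₗ.[ℂ] H₀)
    (hdom : Dense (T.domain : Set Hp))
    (hran : Dense (Set.range fun f : T.domain => T f)) :
    -- (ii) ↔ (iii):
    ((((∀ (fs : ℕ → T.domain) (y : H₀),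
          Tendsto (fun k => ((fs k : Hp))) atTop (𝓝 0) →
          Tendsto (fun k => T (fs k)) atTop (𝓝 y) → y = 0) ∧
        (∀ (fs : ℕ → T.domain) (x : Hp),
          Tendsto (fun k => T (fs k)) atTop (𝓝 0) →
          Tendsto (fun k => ((fs k : Hp))) atTop (𝓝 x) → x = 0))) ↔
      ((∀ y : H₀, ((0 : Hp), y) ∈ closure {p : Hp × H₀ | ∃ f : T.domain,
          (f : Hp) = p.1 ∧ T f = p.2} → y = 0) ∧
        (∀ x : Hp, (x, (0 : H₀)) ∈ closure {p : Hp × H₀ | ∃ f : T.domain,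
          (f : Hp) = p.1 ∧ T f = p.2} → x = 0))) ∧
    -- (iii) ↔ (iv):
    (((∀ y : H₀, ((0 : Hp), y) ∈ closure {p : Hp × H₀ | ∃ f : T.domain,
          (f : Hp) = p.1 ∧ T f = p.2} → y = 0) ∧
        (∀ x : Hp, (x, (0 : H₀)) ∈ closure {p : Hp × H₀ | ∃ f : T.domain,
          (f : Hp) = p.1 ∧ T f = p.2} → x = 0)) ↔
      (Dense {u : H₀ | ∃ v : Hp, InAdjRel T u v} ∧
        Dense {v : Hp | ∃ u : H₀, InAdjRel T u v})) :=
  stmt8_general T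
end
end

section
/- In a quasi Gelfand triple (H₊, H₀, H₋), the adjoint ι₊* of the embedding ι₊ : D₊ ⊆ H₊ → H₀ extends uniquely to a bijective linear isometry Ψ : H₋ → H₊, and H₋ is a Hilbert space with inner product ⟨g,f⟩₋ := ⟨Ψg, Ψf⟩₊, whose induced norm coincides with ‖·‖₋. -/
open Filter Topology
open scoped ComplexInnerProductSpace

noncomputable section

/-!
The adjoint relation is the graph of the adjoint `T†`, and `‖jm u‖ = ‖T† u‖` lets `T† ∘ jm⁻¹`
extend by continuity from the dense range of `jm` to a linear isometry `Ψ : H₋ → H₊`, unique by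
density; polarization turns it into an inner-product preserving map. Its range is closed because
`H₋` is complete, and dense because `T` is closed and injective: a vector `x` orthogonal to the
range of `T†` makes `(x, 0)` orthogonal to the orthogonal complement of the graph of `T`, so
`(x, 0)` lies in that closed graph and `x = 0`.
-/

theorem LinearMap.norm_extendOfNorm_apply_eq {𝕜 E Eₗ F : Type*} [NontriviallyNormedField 𝕜]
    [AddCommGroup E] [Module 𝕜 E] [NormedAddCommGroup Eₗ] [NormedSpace 𝕜 Eₗ]
    [NormedAddCommGroup F] [NormedSpace 𝕜 F] [CompleteSpace F]
    {f : E →ₗ[𝕜] F} {e : E →ₗ[𝕜] Eₗ} (he : DenseRange e) (h : ∀ x, ‖f x‖ = ‖e x‖) (y : Eₗ) :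
    ‖f.extendOfNorm e y‖ = ‖y‖ := by
  refine he.induction (fun _ ⟨x, hx⟩ => ?_) (isClosed_eq (by fun_prop) continuous_norm) y
  rw [← hx, extendOfNorm_eq he ⟨1, fun x => (h x).trans_le (one_mul _).ge⟩, h]

theorem Isometry.surjective_of_denseRange {E F : Type*} [EMetricSpace E] [CompleteSpace E]
    [EMetricSpace F] {f : E → F} (hf : Isometry f) (hd : DenseRange f) :
    Function.Surjective f := by
  rw [← Set.range_eq_univ, ← hf.isClosedEmbedding.isClosed_range.closure_eq, hd.closure_range]

namespace LinearPMap

open scoped InnerProductSpace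

variable {𝕜 E F : Type*} [RCLike 𝕜]
  [NormedAddCommGroup E] [InnerProductSpace 𝕜 E] [CompleteSpace E]
  [NormedAddCommGroup F] [InnerProductSpace 𝕜 F] [CompleteSpace F]
  {T : E →ₗ.[𝕜] F}

theorem IsClosed.mem_graph_of_forall_inner_adjoint (hT : T.IsClosed)
    (hdense : Dense (T.domain : Set E)) {x : E} {y : F}
    (h : ∀ v : T†.domain, ⟪T† v, x⟫_𝕜 = ⟪(v : F), y⟫_𝕜) : (x, y) ∈ T.graph := by
  let G : Submodule 𝕜 (WithLp 2 (E × F)) :=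
    T.graph.comap (WithLp.linearEquiv 2 𝕜 (E × F)).toLinearMap
  have hG : _root_.IsClosed (G : Set (WithLp 2 (E × F))) :=
    hT.preimage (WithLp.prod_continuous_ofLp 2 E F)
  suffices WithLp.toLp 2 (x, y) ∈ Gᗮᗮ by
    rwa [Submodule.orthogonal_orthogonal_eq_closure, hG.submodule_topologicalClosure_eq] at this
  rw [Submodule.mem_orthogonal]
  rintro ⟨a, b⟩ hz
  have hba : (b, -a) ∈ T†.graph := by
    rw [adjoint_graph_eq_graph_adjoint hdense, Submodule.mem_adjoint_iff]
    intro p q hpq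
    have hpq_orth := hz (WithLp.toLp 2 (p, q)) hpq
    rw [WithLp.prod_inner_apply] at hpq_orth
    rw [inner_neg_right]
    linear_combination hpq_orth
  obtain ⟨v, rfl, hv⟩ := (mem_graph_iff _).1 hba
  have hv_inner := h v
  rw [hv, inner_neg_left] at hv_inner
  rw [WithLp.prod_inner_apply]
  linear_combination -hv_inner

theorem IsClosed.denseRange_adjoint (hT : T.IsClosed) (hdense : Dense (T.domain : Set E))
    (hinj : ∀ f : T.domain, T f = 0 → (f : E) = 0) : DenseRange fun v : T†.domain => T† v := by
  change Dense (LinearMap.range T†.toFun : Set E)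
  rw [Submodule.dense_iff_topologicalClosure_eq_top, Submodule.topologicalClosure_eq_top_iff,
    Submodule.eq_bot_iff]
  intro x hx
  have hx0 : (x, (0 : F)) ∈ T.graph :=
    hT.mem_graph_of_forall_inner_adjoint hdense fun v => by
      rw [inner_zero_right]
      exact (Submodule.mem_orthogonal _ _).1 hx _ ⟨v, rfl⟩
  obtain ⟨f, rfl, hf⟩ := (mem_graph_iff _).1 hx0
  exact hinj f hf

end LinearPMap

open scoped LinearPMap

section InAdjRel

variable {Hp H₀ : Type*} [NormedAddCommGroup Hp] [InnerProductSpace ℂ Hp] [CompleteSpace Hp]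
  [NormedAddCommGroup H₀] [InnerProductSpace ℂ H₀] {T : Hp →ₗ.[ℂ] H₀}

theorem inAdjRel_iff_mem_graph_adjoint (hT : Dense (T.domain : Set Hp)) {u : H₀} {v : Hp} :
    InAdjRel T u v ↔ (u, v) ∈ T†.graph := by
  rw [LinearPMap.mem_graph_iff]
  constructor
  · intro h
    have hu : u ∈ T†.domain := LinearPMap.mem_adjoint_domain_of_exists u ⟨v, fun f => (h f).symm⟩
    exact ⟨⟨u, hu⟩, rfl, LinearPMap.adjoint_apply_eq hT ⟨u, hu⟩ fun f => (h f).symm⟩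
  · rintro ⟨w, rfl, rfl⟩ f
    exact (LinearPMap.adjoint_isFormalAdjoint hT w f).symm

theorem setOf_exists_inAdjRel_eq_adjoint_domain (hT : Dense (T.domain : Set Hp)) :
    {u : H₀ | ∃ v : Hp, InAdjRel T u v} = (T†.domain : Set H₀) :=
  Set.ext fun _ => (exists_congr fun _ => inAdjRel_iff_mem_graph_adjoint hT).trans
    LinearPMap.mem_domain_iff.symm

end InAdjRel

theorem stmt9_general {Hp H₀ Hm : Type*}
    [NormedAddCommGroup Hp] [InnerProductSpace ℂ Hp] [CompleteSpace Hp]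
    [NormedAddCommGroup H₀] [InnerProductSpace ℂ H₀] [CompleteSpace H₀]
    [NormedAddCommGroup Hm] [InnerProductSpace ℂ Hm] [CompleteSpace Hm]
    (T : Hp →ₗ.[ℂ] H₀)
    (hdom : Dense (T.domain : Set Hp))
    (hclosed : IsClosed {p : Hp × H₀ | ∃ f : T.domain, (f : Hp) = p.1 ∧ T f = p.2})
    (hinj : ∀ f : T.domain, T f = 0 → (f : Hp) = 0)
    (jm : H₀ →ₗ.[ℂ] Hm)
    (hjm_dom : (jm.domain : Set H₀) = {u : H₀ | ∃ v : Hp, InAdjRel T u v})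
    (hjm_iso : ∀ (u : jm.domain) (v : Hp), InAdjRel T (u : H₀) v → ‖jm u‖ = ‖v‖)
    (hjm_dense : Dense (Set.range fun u : jm.domain => jm u)) :
    ∃! Ψ : Hm →L[ℂ] Hp,
      (∀ (u : jm.domain) (v : Hp), InAdjRel T (u : H₀) v → Ψ (jm u) = v) ∧
      Function.Bijective Ψ ∧
      (∀ a b : Hm, ⟪Ψ a, Ψ b⟫ = ⟪a, b⟫) ∧
      ∀ a : Hm, ‖Ψ a‖ = ‖a‖ := by
  have hT : T.IsClosed := by
    rwa [LinearPMap.IsClosed,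
      show (T.graph : Set (Hp × H₀)) = _ from Set.ext fun _ => T.mem_graph_iff]
  have hD : jm.domain = T†.domain :=
    SetLike.coe_injective (hjm_dom.trans (setOf_exists_inAdjRel_eq_adjoint_domain hdom))
  let a : jm.domain →ₗ[ℂ] Hp := T†.toFun ∘ₗ Submodule.inclusion hD.le
  have ha_graph (u : jm.domain) : ((u : H₀), a u) ∈ T†.graph :=
    T†.mem_graph (Submodule.inclusion hD.le u)
  have ha_rel (u : jm.domain) : InAdjRel T u (a u) :=
    (inAdjRel_iff_mem_graph_adjoint hdom).2 (ha_graph u)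
  have ha_norm (u : jm.domain) : ‖a u‖ = ‖jm u‖ := (hjm_iso u _ (ha_rel u)).symm
  let Ψ : Hm →L[ℂ] Hp := a.extendOfNorm jm.toFun
  have hΨ_jm (u : jm.domain) : Ψ (jm u) = a u :=
    LinearMap.extendOfNorm_eq hjm_dense ⟨1, fun u => (ha_norm u).trans_le (one_mul _).ge⟩ u
  have hΨ_norm : ∀ y, ‖Ψ y‖ = ‖y‖ := LinearMap.norm_extendOfNorm_apply_eq hjm_dense ha_norm
  have hΨ_dense : DenseRange Ψ := (hT.denseRange_adjoint hdom hinj).mono <| by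
    rintro _ ⟨w, rfl⟩
    exact ⟨jm ⟨w, hD.ge w.2⟩, hΨ_jm _⟩
  have hΨ_isom : Isometry Ψ := AddMonoidHomClass.isometry_of_norm Ψ hΨ_norm
  refine ⟨Ψ, ⟨fun u v h => (hΨ_jm u).trans ?_,
    ⟨hΨ_isom.injective, hΨ_isom.surjective_of_denseRange hΨ_dense⟩,
    (LinearMap.norm_map_iff_inner_map_map Ψ).1 hΨ_norm, hΨ_norm⟩, ?_⟩
  · exact T†.mem_graph_snd_inj (ha_graph u) ((inAdjRel_iff_mem_graph_adjoint hdom).1 h) rfl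
  · rintro Ψ' ⟨hΨ', -⟩
    refine ContinuousLinearMap.coeFn_injective <| Ψ'.continuous.ext_on hjm_dense Ψ.continuous ?_
    rintro _ ⟨u, rfl⟩
    exact (hΨ' u _ (ha_rel u)).trans (hΨ_jm u).symm

/-- In a quasi Gelfand triple `(H₊, H₀, H₋)` — `ι₊` densely defined, with
dense range, closed graph and injective, and `H₋` the completion of `D₋ = dom ι₊*` realized by
a norm-preserving map `jm : D₋ → H₋` with dense range — the adjoint `ι₊*` extends uniquely to
a bijective linear isometry `Ψ : H₋ → H₊`, and `H₋` is a Hilbert space whose inner product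
satisfies `⟨g,f⟩₋ = ⟨Ψg, Ψf⟩₊`, its norm coinciding with `‖·‖₋`. -/
theorem stmt9 {Hp H₀ Hm : Type*}
    [NormedAddCommGroup Hp] [InnerProductSpace ℂ Hp] [CompleteSpace Hp]
    [NormedAddCommGroup H₀] [InnerProductSpace ℂ H₀] [CompleteSpace H₀]
    [NormedAddCommGroup Hm] [InnerProductSpace ℂ Hm] [CompleteSpace Hm]
    (T : Hp →ₗ.[ℂ] H₀)
    (hdom : Dense (T.domain : Set Hp))
    (hran : Dense (Set.range fun f : T.domain => T f))
    (hclosed : IsClosed {p : Hp × H₀ | ∃ f : T.domain, (f : Hp) = p.1 ∧ T f = p.2})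
    (hinj : ∀ f : T.domain, T f = 0 → (f : Hp) = 0)
    (jm : H₀ →ₗ.[ℂ] Hm)
    (hjm_dom : (jm.domain : Set H₀) = {u : H₀ | ∃ v : Hp, InAdjRel T u v})
    (hjm_iso : ∀ (u : jm.domain) (v : Hp), InAdjRel T (u : H₀) v → ‖jm u‖ = ‖v‖)
    (hjm_dense : Dense (Set.range fun u : jm.domain => jm u)) :
    ∃! Ψ : Hm →L[ℂ] Hp,
      (∀ (u : jm.domain) (v : Hp), InAdjRel T (u : H₀) v → Ψ (jm u) = v) ∧
      Function.Bijective Ψ ∧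
      (∀ a b : Hm, ⟪Ψ a, Ψ b⟫ = ⟪a, b⟫) ∧
      ∀ a : Hm, ‖Ψ a‖ = ‖a‖ :=
  stmt9_general T hdom hclosed hinj jm hjm_dom hjm_iso hjm_dense
end
end

section
/- In a quasi Gelfand triple setting, the space D₊ ∩ D₋ is complete with respect to the norm ‖f‖²_{+∩−} := ‖f‖²₊ + ‖f‖²₋. Key step: for f ∈ D₊ ∩ D₋ one has ‖f‖²₀ ≤ ‖f‖₋ ‖f‖₊ ≤ ‖f‖²_{+∩−}. -/
open Filter Topology
open scoped ComplexInnerProductSpace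

noncomputable section

lemma inAdjRel_sub {Hp H₀ : Type*}
    [NormedAddCommGroup Hp] [InnerProductSpace ℂ Hp]
    [NormedAddCommGroup H₀] [InnerProductSpace ℂ H₀]
    (T : Hp →ₗ.[ℂ] H₀) {x y : T.domain} {v w : Hp}
    (hx : InAdjRel T (T x) v) (hy : InAdjRel T (T y) w) :
    InAdjRel T (T (x - y)) (v - w) := by
  intro f
  rw [T.map_sub, inner_sub_left, hx f, hy f, ← inner_sub_left]

lemma key_ineq {Hp H₀ : Type*}
    [NormedAddCommGroup Hp] [InnerProductSpace ℂ Hp]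
    [NormedAddCommGroup H₀] [InnerProductSpace ℂ H₀]
    (T : Hp →ₗ.[ℂ] H₀) (x : T.domain) (v : Hp) (h : InAdjRel T (T x) v) :
    ‖T x‖ ^ 2 ≤ ‖v‖ * ‖(x : Hp)‖ := by
  have h2 : ‖T x‖ ^ 2 = RCLike.re ⟪v, (x : Hp)⟫ := by
    rw [← h x, inner_self_eq_norm_sq]
  calc ‖T x‖ ^ 2 = RCLike.re ⟪v, (x : Hp)⟫ := h2
    _ ≤ ‖⟪v, (x : Hp)⟫‖ := RCLike.re_le_norm _
    _ ≤ ‖v‖ * ‖(x : Hp)‖ := norm_inner_le_norm v _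

/-- In a quasi Gelfand triple setting (`ι₊ = T` closed and densely
defined), `D₊ ∩ D₋` is complete with respect to `‖f‖²_{+∩−} = ‖f‖₊² + ‖f‖₋²`, where for
`x ∈ D₊ ∩ D₋` the minus norm is `‖x‖₋ = ‖ι₊* x‖₊`, i.e. `‖v‖` for the adjoint vector `v` of
`T x`.  Key step: `‖x‖₀² ≤ ‖x‖₋ ‖x‖₊ ≤ ‖x‖²_{+∩−}`. -/
theorem stmt10 {Hp H₀ : Type*}
    [NormedAddCommGroup Hp] [InnerProductSpace ℂ Hp] [CompleteSpace Hp]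
    [NormedAddCommGroup H₀] [InnerProductSpace ℂ H₀] [CompleteSpace H₀]
    (T : Hp →ₗ.[ℂ] H₀)
    (hdom : Dense (T.domain : Set Hp))
    (hclosed : IsClosed {p : Hp × H₀ | ∃ f : T.domain, (f : Hp) = p.1 ∧ T f = p.2}) :
    -- key inequality
    (∀ (x : T.domain) (v : Hp), InAdjRel T (T x) v →
      ‖T x‖ ^ 2 ≤ ‖v‖ * ‖(x : Hp)‖ ∧ ‖v‖ * ‖(x : Hp)‖ ≤ ‖(x : Hp)‖ ^ 2 + ‖v‖ ^ 2) ∧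
    -- completeness of `D₊ ∩ D₋` in the norm `√(‖·‖₊² + ‖·‖₋²)`
    (∀ (xs : ℕ → T.domain) (vs : ℕ → Hp), (∀ k, InAdjRel T (T (xs k)) (vs k)) →
      (∀ ε > (0 : ℝ), ∃ N, ∀ k ≥ N, ∀ l ≥ N,
        Real.sqrt (‖(xs k : Hp) - (xs l : Hp)‖ ^ 2 + ‖vs k - vs l‖ ^ 2) < ε) →
      ∃ (x : T.domain) (v : Hp), InAdjRel T (T x) v ∧
        Tendsto (fun k =>
          Real.sqrt (‖(xs k : Hp) - (x : Hp)‖ ^ 2 + ‖vs k - v‖ ^ 2)) atTop (𝓝 0)) := by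
  constructor
  · intro x v h
    refine ⟨key_ineq T x v h, ?_⟩
    nlinarith [sq_nonneg (‖v‖ - ‖(x : Hp)‖)]
  · intro xs vs hadj hcauchy
    -- bounds of each component by the sqrt
    have hbx : ∀ k l, ‖(xs k : Hp) - (xs l : Hp)‖ ≤
        Real.sqrt (‖(xs k : Hp) - (xs l : Hp)‖ ^ 2 + ‖vs k - vs l‖ ^ 2) := by
      intro k l
      calc ‖(xs k : Hp) - (xs l : Hp)‖
          = Real.sqrt (‖(xs k : Hp) - (xs l : Hp)‖ ^ 2) := by
            rw [Real.sqrt_sq (norm_nonneg _)]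
        _ ≤ _ := Real.sqrt_le_sqrt (le_add_of_nonneg_right (sq_nonneg _))
    have hbv : ∀ k l, ‖vs k - vs l‖ ≤
        Real.sqrt (‖(xs k : Hp) - (xs l : Hp)‖ ^ 2 + ‖vs k - vs l‖ ^ 2) := by
      intro k l
      calc ‖vs k - vs l‖
          = Real.sqrt (‖vs k - vs l‖ ^ 2) := by rw [Real.sqrt_sq (norm_nonneg _)]
        _ ≤ _ := Real.sqrt_le_sqrt (le_add_of_nonneg_left (sq_nonneg _))
    have hcx : CauchySeq (fun k => (xs k : Hp)) := by
      rw [Metric.cauchySeq_iff]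
      intro ε hε
      obtain ⟨N, hN⟩ := hcauchy ε hε
      exact ⟨N, fun k hk l hl => by
        rw [dist_eq_norm]; exact lt_of_le_of_lt (hbx k l) (hN k hk l hl)⟩
    have hcv : CauchySeq vs := by
      rw [Metric.cauchySeq_iff]
      intro ε hε
      obtain ⟨N, hN⟩ := hcauchy ε hε
      exact ⟨N, fun k hk l hl => by
        rw [dist_eq_norm]; exact lt_of_le_of_lt (hbv k l) (hN k hk l hl)⟩
    have hcT : CauchySeq (fun k => T (xs k)) := by
      rw [Metric.cauchySeq_iff]
      intro ε hε
      obtain ⟨N, hN⟩ := hcauchy ε hε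
      refine ⟨N, fun k hk l hl => ?_⟩
      have hsub := inAdjRel_sub T (hadj k) (hadj l)
      have h1 := key_ineq T (xs k - xs l) (vs k - vs l) hsub
      have hx' : ((xs k - xs l : T.domain) : Hp) = (xs k : Hp) - (xs l : Hp) := rfl
      have hT' : T (xs k - xs l) = T (xs k) - T (xs l) := T.map_sub _ _
      rw [hx', hT'] at h1
      have h2 := hN k hk l hl
      have h3 : ‖(xs k : Hp) - (xs l : Hp)‖ < ε := lt_of_le_of_lt (hbx k l) h2
      have h4 : ‖vs k - vs l‖ < ε := lt_of_le_of_lt (hbv k l) h2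
      rw [dist_eq_norm]
      have h5 : ‖T (xs k) - T (xs l)‖ ^ 2 < ε ^ 2 := by nlinarith [norm_nonneg ((xs k : Hp) - (xs l : Hp)), norm_nonneg (vs k - vs l), norm_nonneg (T (xs k) - T (xs l))]
      exact lt_of_pow_lt_pow_left₀ 2 hε.le h5
    obtain ⟨xL, hxL⟩ := cauchySeq_tendsto_of_complete hcx
    obtain ⟨v, hv⟩ := cauchySeq_tendsto_of_complete hcv
    obtain ⟨y, hy⟩ := cauchySeq_tendsto_of_complete hcT
    -- graph closedness
    have hmem : (xL, y) ∈ {p : Hp × H₀ | ∃ f : T.domain, (f : Hp) = p.1 ∧ T f = p.2} := by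
      apply hclosed.mem_of_tendsto ((hxL.prodMk_nhds hy))
      exact Eventually.of_forall fun k => ⟨xs k, rfl, rfl⟩
    obtain ⟨x, hx1, hx2⟩ := hmem
    refine ⟨x, v, ?_, ?_⟩
    · intro f
      rw [hx2]
      have t1 : Tendsto (fun k => ⟪T (xs k), T f⟫) atTop (𝓝 ⟪y, T f⟫) :=
        (Tendsto.inner hy tendsto_const_nhds)
      have t2 : Tendsto (fun k => ⟪vs k, (f : Hp)⟫) atTop (𝓝 ⟪v, (f : Hp)⟫) :=
        (Tendsto.inner hv tendsto_const_nhds)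
      have : (fun k => ⟪T (xs k), T f⟫) = fun k => ⟪vs k, (f : Hp)⟫ :=
        funext fun k => hadj k f
      rw [this] at t1
      exact tendsto_nhds_unique t1 t2
    · have t1 : Tendsto (fun k => ‖(xs k : Hp) - (x : Hp)‖ ^ 2) atTop (𝓝 0) := by
        have : Tendsto (fun k => ‖(xs k : Hp) - (x : Hp)‖) atTop (𝓝 0) := by
          rw [hx1]
          exact (tendsto_iff_norm_sub_tendsto_zero.mp hxL)
        simpa using this.pow 2
      have t2 : Tendsto (fun k => ‖vs k - v‖ ^ 2) atTop (𝓝 0) := by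
        have : Tendsto (fun k => ‖vs k - v‖) atTop (𝓝 0) :=
          tendsto_iff_norm_sub_tendsto_zero.mp hv
        simpa using this.pow 2
      have := (t1.add t2).sqrt
      simpa using this
end
end

section
/- Let (H₊, H₀, H₋) be a quasi Gelfand triple with embeddings ι₊ : D₊ ⊆ H₊ → H₀ and ι₋ : D₋ ⊆ H₋ → H₀. Then the operator [ι₊ ι₋] : D₊ × D₋ ⊆ H₊ × H₋ → H₀, (f,g) ↦ f + g, is closed. -/
open Filter Topology
open scoped ComplexInnerProductSpace

noncomputable section

/-- A quasi Gelfand triple `(H₊, H₀, H₋)`, encoded by the two embeddings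
`ι₊ : D₊ ⊆ H₊ → H₀` and `ι₋ : D₋ ⊆ H₋ → H₀`: both are injective, closed, densely defined
with dense ranges, and the `H₋`-norm of an element of `D₋` equals the `H₊`-norm of its image
under the adjoint `ι₊*` (which exactly says that `H₋` completes `D₋` under
`‖g‖₋ = sup_{f ∈ D₊} |⟨g, f⟩₀|/‖f‖₊`); moreover `ran ι₋` is all of `dom ι₊*`. -/
structure QuasiGelfandTriple (Hp H₀ Hm : Type*)
    [NormedAddCommGroup Hp] [InnerProductSpace ℂ Hp] [CompleteSpace Hp]
    [NormedAddCommGroup H₀] [InnerProductSpace ℂ H₀] [CompleteSpace H₀]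
    [NormedAddCommGroup Hm] [InnerProductSpace ℂ Hm] [CompleteSpace Hm] where
  ip : Hp →ₗ.[ℂ] H₀
  im : Hm →ₗ.[ℂ] H₀
  ip_dense_dom : Dense (ip.domain : Set Hp)
  im_dense_dom : Dense (im.domain : Set Hm)
  ip_closed : IsClosed {p : Hp × H₀ | ∃ f : ip.domain, (f : Hp) = p.1 ∧ ip f = p.2}
  im_closed : IsClosed {p : Hm × H₀ | ∃ g : im.domain, (g : Hm) = p.1 ∧ im g = p.2}
  ip_injective : ∀ f : ip.domain, ip f = 0 → (f : Hp) = 0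
  im_injective : ∀ g : im.domain, im g = 0 → (g : Hm) = 0
  ip_dense_ran : Dense (Set.range fun f : ip.domain => ip f)
  im_dense_ran : Dense (Set.range fun g : im.domain => im g)
  riesz : ∀ g : im.domain, ∃ v : Hp,
    (∀ f : ip.domain, ⟪im g, ip f⟫ = ⟪v, (f : Hp)⟫) ∧ ‖v‖ = ‖(g : Hm)‖
  ran_im : ∀ (u : H₀) (v : Hp),
    (∀ f : ip.domain, ⟪u, ip f⟫ = ⟪v, (f : Hp)⟫) → ∃ g : im.domain, im g = u

/-!
For `f ∈ D₊`, `g ∈ D₋` the cross term of `‖ι₊f + ι₋g‖²` is the duality pairing, bounded by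
`‖g‖₋ ‖f‖₊`, so `‖ι₊f‖² ≤ ‖ι₊f + ι₋g‖² + 2 ‖g‖₋ ‖f‖₊`. Applied to differences, this shows that if
`(fₙ, gₙ)` converges in `H₊ × H₋` and `ι₊fₙ + ι₋gₙ` converges in `H₀`, then `ι₊fₙ` is Cauchy, hence
both `ι₊fₙ` and `ι₋gₙ` converge, and the closedness of `ι₊` and `ι₋` identifies the limit.
-/

theorem cauchySeq_of_dist_sq_le {α β γ δ : Type*} [PseudoMetricSpace α] [PseudoMetricSpace β]
    [PseudoMetricSpace γ] [PseudoMetricSpace δ] {u : ℕ → α} {v : ℕ → β} {y : ℕ → γ} {z : ℕ → δ}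
    (hv : CauchySeq v) (hy : CauchySeq y) (hz : CauchySeq z)
    (h : ∀ n m, dist (u n) (u m) ^ 2 ≤
      dist (v n) (v m) ^ 2 + 2 * (dist (y n) (y m) * dist (z n) (z m))) :
    CauchySeq u := by
  rw [cauchySeq_iff_tendsto_dist_atTop_0] at hv hy hz ⊢
  have hbound : Tendsto (fun q : ℕ × ℕ =>
      √(dist (v q.1) (v q.2) ^ 2 + 2 * (dist (y q.1) (y q.2) * dist (z q.1) (z q.2))))
      atTop (𝓝 0) := by
    simpa using ((hv.pow 2).add ((hy.mul hz).const_mul 2)).sqrt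
  exact squeeze_zero (fun _ => dist_nonneg) (fun q => Real.le_sqrt_of_sq_le (h q.1 q.2)) hbound

namespace QuasiGelfandTriple

variable {Hp H₀ Hm : Type*}
    [NormedAddCommGroup Hp] [InnerProductSpace ℂ Hp] [CompleteSpace Hp]
    [NormedAddCommGroup H₀] [InnerProductSpace ℂ H₀] [CompleteSpace H₀]
    [NormedAddCommGroup Hm] [InnerProductSpace ℂ Hm] [CompleteSpace Hm]
    (Q : QuasiGelfandTriple Hp H₀ Hm)

theorem norm_inner_im_ip_le (g : Q.im.domain) (f : Q.ip.domain) :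
    ‖⟪Q.im g, Q.ip f⟫‖ ≤ ‖(g : Hm)‖ * ‖(f : Hp)‖ := by
  obtain ⟨v, hv, hnv⟩ := Q.riesz g
  rw [hv f, ← hnv]
  exact norm_inner_le_norm v f

theorem norm_ip_sq_le (f : Q.ip.domain) (g : Q.im.domain) :
    ‖Q.ip f‖ ^ 2 ≤ ‖Q.ip f + Q.im g‖ ^ 2 + 2 * (‖(g : Hm)‖ * ‖(f : Hp)‖) := by
  have hcross : -(‖(g : Hm)‖ * ‖(f : Hp)‖) ≤ RCLike.re ⟪Q.ip f, Q.im g⟫ := by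
    calc -(‖(g : Hm)‖ * ‖(f : Hp)‖) ≤ -‖⟪Q.ip f, Q.im g⟫‖ := by
          rw [norm_inner_symm]; exact neg_le_neg (Q.norm_inner_im_ip_le g f)
      _ ≤ RCLike.re ⟪Q.ip f, Q.im g⟫ := neg_le_of_abs_le (RCLike.abs_re_le_norm _)
  nlinarith [norm_add_sq (𝕜 := ℂ) (Q.ip f) (Q.im g), sq_nonneg ‖Q.im g‖]

theorem cauchySeq_ip {f : ℕ → Q.ip.domain} {g : ℕ → Q.im.domain}
    (hf : CauchySeq fun n => (f n : Hp)) (hg : CauchySeq fun n => (g n : Hm))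
    (hsum : CauchySeq fun n => Q.ip (f n) + Q.im (g n)) :
    CauchySeq fun n => Q.ip (f n) := by
  refine cauchySeq_of_dist_sq_le hsum hg hf fun n m => ?_
  have hsub : Q.ip (f n) + Q.im (g n) - (Q.ip (f m) + Q.im (g m))
      = Q.ip (f n - f m) + Q.im (g n - g m) := by
    rw [Q.ip.map_sub, Q.im.map_sub]; abel
  simpa only [dist_eq_norm, ← Q.ip.map_sub, hsub, Submodule.coe_sub]
    using Q.norm_ip_sq_le (f n - f m) (g n - g m)

end QuasiGelfandTriple

/-- In a quasi Gelfand triple `(H₊, H₀, H₋)` the operator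
`[ι₊ ι₋] : D₊ × D₋ ⊆ H₊ × H₋ → H₀, (f,g) ↦ ι₊f + ι₋g` is closed. -/
theorem stmt11 {Hp H₀ Hm : Type*}
    [NormedAddCommGroup Hp] [InnerProductSpace ℂ Hp] [CompleteSpace Hp]
    [NormedAddCommGroup H₀] [InnerProductSpace ℂ H₀] [CompleteSpace H₀]
    [NormedAddCommGroup Hm] [InnerProductSpace ℂ Hm] [CompleteSpace Hm]
    (Q : QuasiGelfandTriple Hp H₀ Hm) :
    IsClosed {p : (Hp × Hm) × H₀ | ∃ (f : Q.ip.domain) (g : Q.im.domain),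
      (f : Hp) = p.1.1 ∧ (g : Hm) = p.1.2 ∧ Q.ip f + Q.im g = p.2} := by
  refine isSeqClosed_iff_isClosed.mp fun x p hx hxp => ?_
  choose f g hf hg hsum using hx
  have hfp : Tendsto (fun n => (f n : Hp)) atTop (𝓝 p.1.1) := by
    simpa only [hf] using hxp.fst_nhds.fst_nhds
  have hgp : Tendsto (fun n => (g n : Hm)) atTop (𝓝 p.1.2) := by
    simpa only [hg] using hxp.fst_nhds.snd_nhds
  have hsump : Tendsto (fun n => Q.ip (f n) + Q.im (g n)) atTop (𝓝 p.2) := by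
    simpa only [hsum] using hxp.snd_nhds
  obtain ⟨a, ha⟩ := cauchySeq_tendsto_of_complete
    (Q.cauchySeq_ip hfp.cauchySeq hgp.cauchySeq hsump.cauchySeq)
  have hb : Tendsto (fun n => Q.im (g n)) atTop (𝓝 (p.2 - a)) := by
    simpa using hsump.sub ha
  obtain ⟨F, hF, hFa⟩ := Q.ip_closed.mem_of_tendsto (hfp.prodMk_nhds ha)
    (Eventually.of_forall fun n => ⟨f n, rfl, rfl⟩)
  obtain ⟨G, hG, hGb⟩ := Q.im_closed.mem_of_tendsto (hgp.prodMk_nhds hb)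
    (Eventually.of_forall fun n => ⟨g n, rfl, rfl⟩)
  exact ⟨F, G, hF, hG, by rw [hFa, hGb, add_sub_cancel]⟩
end
end

section
/- In a quasi Gelfand triple (H₊, H₀, H₋), the intersection D₊ ∩ D₋ is dense in H₀. -/
open Filter Topology
open scoped ComplexInnerProductSpace

noncomputable section

/-! For a closed densely defined `T : E → F`, the orthogonal decomposition of `E × F` along the
graph of `T` writes every `u ∈ F` as `b + T f` with `b ∈ dom T†` and `T† b = f`. If `w` is
orthogonal to `ran T ∩ dom T†`, decompose `w = b₁ + T g₁` and then `b₁ = b₂ + T g₂`: the vector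
`T g₂ = b₁ - b₂` lies in `ran T ∩ dom T†`, and pairing it with `w` gives `‖g₁‖² = 0`. Hence
`w = b₁` and `T† w = 0`, i.e. `w ⊥ ran T`. For `T = ι₊` the range is dense and
`dom ι₊† ⊆ ran ι₋`, so `ran ι₊ ∩ ran ι₋ ⊇ ran ι₊ ∩ dom ι₊†` is dense. -/

namespace LinearPMap

open scoped InnerProductSpace

variable {𝕜 E F : Type*} [RCLike 𝕜]
  [NormedAddCommGroup E] [InnerProductSpace 𝕜 E] [CompleteSpace E]
  [NormedAddCommGroup F] [InnerProductSpace 𝕜 F] [CompleteSpace F]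
  {T : E →ₗ.[𝕜] F}

theorem exists_adjoint_add_eq (hT : Dense (T.domain : Set E)) (hc : T.IsClosed) (u : F) :
    ∃ (b : T†.domain) (f : T.domain), T† b = f ∧ (b : F) + T f = u := by
  set K : Submodule 𝕜 (WithLp 2 (E × F)) :=
    T.graph.comap (WithLp.linearEquiv 2 𝕜 (E × F)).toLinearMap
  have : CompleteSpace K :=
    (hc.preimage (WithLp.prod_continuous_ofLp 2 E F)).completeSpace_coe
  obtain ⟨y, hy, z, hz, hyz⟩ := K.exists_add_mem_mem_orthogonal (WithLp.toLp 2 (0, u))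
  obtain ⟨f, hf₁, hf₂⟩ := T.mem_graph_iff.mp hy
  have hz_orth (g : T.domain) : ⟪z.fst, (g : E)⟫_𝕜 + ⟪z.snd, T g⟫_𝕜 = 0 := by
    simpa [WithLp.prod_inner_apply] using
      K.inner_left_of_mem_orthogonal (u := WithLp.toLp 2 ((g : E), T g)) (T.mem_graph g) hz
  have hfst : (f : E) + z.fst = 0 := by
    rw [hf₁]; simpa using (congrArg WithLp.fst hyz).symm
  have hsnd : T f + z.snd = u := by
    rw [hf₂]; simpa using (congrArg WithLp.snd hyz).symm
  have hadj (g : T.domain) : ⟪-z.fst, (g : E)⟫_𝕜 = ⟪z.snd, T g⟫_𝕜 := by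
    rw [inner_neg_left, neg_eq_iff_add_eq_zero, hz_orth]
  have hz_dom : z.snd ∈ T†.domain := mem_adjoint_domain_of_exists _ ⟨_, hadj⟩
  refine ⟨⟨z.snd, hz_dom⟩, f, ?_, by rw [add_comm, hsnd]⟩
  rw [adjoint_apply_eq hT _ hadj, neg_eq_iff_add_eq_zero, add_comm, hfst]

theorem orthogonal_range_inf_adjoint_domain (hT : Dense (T.domain : Set E)) (hc : T.IsClosed) :
    (LinearMap.range T.toFun ⊓ T†.domain)ᗮ = (LinearMap.range T.toFun)ᗮ := by
  refine le_antisymm (fun w hw ↦ ?_) (Submodule.orthogonal_le inf_le_left)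
  have hadj := adjoint_isFormalAdjoint hT
  obtain ⟨b₁, g₁, hb₁, hw_eq⟩ := exists_adjoint_add_eq hT hc w
  obtain ⟨b₂, g₂, hb₂, hb₁_eq⟩ := exists_adjoint_add_eq hT hc (b₁ : F)
  have hTg₂ : T g₂ = b₁ - b₂ := by rw [← hb₁_eq]; abel
  have hTg₂_mem : T g₂ ∈ LinearMap.range T.toFun ⊓ T†.domain :=
    ⟨⟨g₂, rfl⟩, hTg₂ ▸ sub_mem b₁.2 b₂.2⟩
  have hg₁ : ⟪(g₁ : E), g₁⟫_𝕜 = 0 := by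
    rw [← Submodule.inner_right_of_mem_orthogonal hTg₂_mem hw, ← hw_eq, inner_add_right,
      ← inner_conj_symm (T g₂ : F), ← hadj b₁ g₂, hb₁, inner_conj_symm, hTg₂, inner_sub_left,
      ← hadj b₁ g₁, ← hadj b₂ g₁, hb₁, hb₂]
    ring
  obtain rfl : g₁ = 0 := Subtype.ext (inner_self_eq_zero.mp hg₁)
  rw [Submodule.mem_orthogonal']
  rintro _ ⟨g, rfl⟩
  rw [← hw_eq, map_zero, add_zero, toFun_eq_coe, ← hadj, hb₁, ZeroMemClass.coe_zero,
    inner_zero_left]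

theorem topologicalClosure_range_inf_adjoint_domain (hT : Dense (T.domain : Set E))
    (hc : T.IsClosed) :
    (LinearMap.range T.toFun ⊓ T†.domain).topologicalClosure =
      (LinearMap.range T.toFun).topologicalClosure := by
  rw [← Submodule.orthogonal_orthogonal_eq_closure, ← Submodule.orthogonal_orthogonal_eq_closure,
    orthogonal_range_inf_adjoint_domain hT hc]

end LinearPMap

namespace QuasiGelfandTriple

variable {Hp H₀ Hm : Type*}
  [NormedAddCommGroup Hp] [InnerProductSpace ℂ Hp] [CompleteSpace Hp]
  [NormedAddCommGroup H₀] [InnerProductSpace ℂ H₀] [CompleteSpace H₀]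
  [NormedAddCommGroup Hm] [InnerProductSpace ℂ Hm] [CompleteSpace Hm]

theorem ip_isClosed (Q : QuasiGelfandTriple Hp H₀ Hm) : Q.ip.IsClosed := by
  rw [LinearPMap.IsClosed]
  convert Q.ip_closed using 2
  ext
  exact Q.ip.mem_graph_iff

end QuasiGelfandTriple

/-- In a quasi Gelfand triple `(H₊, H₀, H₋)`, the intersection
`D₊ ∩ D₋` is dense in the pivot space `H₀`. -/
theorem stmt12 {Hp H₀ Hm : Type*}
    [NormedAddCommGroup Hp] [InnerProductSpace ℂ Hp] [CompleteSpace Hp]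
    [NormedAddCommGroup H₀] [InnerProductSpace ℂ H₀] [CompleteSpace H₀]
    [NormedAddCommGroup Hm] [InnerProductSpace ℂ Hm] [CompleteSpace Hm]
    (Q : QuasiGelfandTriple Hp H₀ Hm) :
    Dense {u : H₀ | (∃ f : Q.ip.domain, Q.ip f = u) ∧ ∃ g : Q.im.domain, Q.im g = u} := by
  have hran : (LinearMap.range Q.ip.toFun).topologicalClosure = ⊤ :=
    (Submodule.dense_iff_topologicalClosure_eq_top).mp Q.ip_dense_ran
  have hdense :
      Dense ((LinearMap.range Q.ip.toFun ⊓ Q.ip.adjoint.domain : Submodule ℂ H₀) : Set H₀) := by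
    rw [Submodule.dense_iff_topologicalClosure_eq_top,
      LinearPMap.topologicalClosure_range_inf_adjoint_domain Q.ip_dense_dom Q.ip_isClosed, hran]
  refine hdense.mono ?_
  rintro _ ⟨⟨f, rfl⟩, hf⟩
  exact ⟨⟨f, rfl⟩, Q.ran_im _ (Q.ip.adjoint ⟨_, hf⟩)
    fun g ↦ (LinearPMap.adjoint_isFormalAdjoint Q.ip_dense_dom ⟨_, hf⟩ g).symm⟩
end
end

section
/- In a quasi Gelfand triple (H₊, H₀, H₋), one has D₊ + D₋ = H₀: every x ∈ H₀ decomposes as x = g + ι₊ι₊*g for some g ∈ dom(ι₊ι₊*) ⊆ D₋, with ι₊ι₊*g ∈ D₊. -/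
/-! For a closed operator `T : E → F` between Hilbert spaces, the skew-swapped graph
`{(T f, -f)}` is a closed subspace of `F ⊕₂ E` whose orthogonal complement is the graph of the
adjoint relation. Decomposing `(x, 0)` along these two subspaces gives `x = u + T f` with
`T* u = f` (von Neumann's argument that `I + T T*` is onto). Applied to `T = ι₊`, the range
condition of a quasi Gelfand triple places `u` in `D₋`. -/

open Filter Topology
open scoped ComplexInnerProductSpace

noncomputable section

open scoped InnerProductSpace

section

variable {𝕜 E F : Type*} [RCLike 𝕜]
  [NormedAddCommGroup E] [InnerProductSpace 𝕜 E] [CompleteSpace E]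
  [NormedAddCommGroup F] [InnerProductSpace 𝕜 F] [CompleteSpace F]

namespace Submodule

theorem map_skewSwap_symm_sup_adjoint_eq_top (g : Submodule 𝕜 (E × F))
    (hg : IsClosed (g : Set (E × F))) :
    g.map (LinearEquiv.skewSwap 𝕜 F E).symm.toLinearMap ⊔ g.adjoint = ⊤ := by
  set toL2 := WithLp.linearEquiv 2 𝕜 (F × E)
  set K := g.map ((LinearEquiv.skewSwap 𝕜 F E).symm.trans toL2.symm).toLinearMap
  have hK : IsClosed (K : Set (WithLp 2 (F × E))) := by
    rw [Submodule.map_coe, LinearEquiv.coe_coe, LinearEquiv.image_eq_preimage_symm]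
    exact hg.preimage (by fun_prop : Continuous fun p : WithLp 2 (F × E) => (-p.snd, p.fst))
  have : CompleteSpace K := hK.completeSpace_coe
  have hsup := congrArg (Submodule.map toL2.toLinearMap)
    K.sup_orthogonal_of_hasOrthogonalProjection
  -- `g.adjoint` is by definition the image of `Kᗮ` under `toL2`
  rwa [Submodule.map_sup, Submodule.map_top, LinearMap.range_eq_top.mpr toL2.surjective,
    ← Submodule.map_comp] at hsup

end Submodule

namespace LinearPMap

theorem exists_add_apply_eq_of_isClosed {T : E →ₗ.[𝕜] F} (hT : T.IsClosed) (x : F) :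
    ∃ (f : T.domain) (u : F), (∀ f' : T.domain, ⟪u, T f'⟫_𝕜 = ⟪(f : E), f'⟫_𝕜) ∧ u + T f = x := by
  have hx : ((x, 0) : F × E) ∈ T.graph.map (LinearEquiv.skewSwap 𝕜 F E).symm.toLinearMap ⊔
      T.graph.adjoint := by
    rw [T.graph.map_skewSwap_symm_sup_adjoint_eq_top hT]
    exact Submodule.mem_top
  obtain ⟨_, ⟨⟨a, b⟩, hab, rfl⟩, ⟨u, v⟩, huv, hsum⟩ := Submodule.mem_sup.mp hx
  obtain ⟨f, rfl, rfl⟩ := T.mem_graph_iff.mp hab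
  simp only [LinearEquiv.coe_coe, LinearEquiv.skewSwap_symm_apply, Prod.mk_add_mk,
    Prod.mk.injEq, neg_add_eq_zero] at hsum
  obtain ⟨rfl, hv⟩ := hsum
  refine ⟨f, u, fun f' => ?_, add_comm _ _⟩
  have horth := (Submodule.mem_adjoint_iff _ _).mp huv f' (T f') (T.mem_graph f')
  rw [sub_eq_zero, ← hv] at horth
  rw [← inner_conj_symm, horth, inner_conj_symm]

end LinearPMap

end

theorem QuasiGelfandTriple.ip_isClosed_s15 {Hp H₀ Hm : Type*}
    [NormedAddCommGroup Hp] [InnerProductSpace ℂ Hp] [CompleteSpace Hp]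
    [NormedAddCommGroup H₀] [InnerProductSpace ℂ H₀] [CompleteSpace H₀]
    [NormedAddCommGroup Hm] [InnerProductSpace ℂ Hm] [CompleteSpace Hm]
    (Q : QuasiGelfandTriple Hp H₀ Hm) : Q.ip.IsClosed := by
  show IsClosed (Q.ip.graph : Set (Hp × H₀))
  convert Q.ip_closed using 1
  exact Set.ext fun _ => Q.ip.mem_graph_iff

/-- In a quasi Gelfand triple `(H₊, H₀, H₋)` one has `D₊ + D₋ = H₀`:
every `x ∈ H₀` decomposes as `x = g + ι₊ι₊*g` with `g ∈ dom(ι₊ι₊*) ⊆ D₋` (here `v = ι₊*g` is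
characterized by `⟨g, ι₊f⟩₀ = ⟨v, f⟩₊` for all `f ∈ D₊`, and `v ∈ D₊`). -/
theorem stmt15 {Hp H₀ Hm : Type*}
    [NormedAddCommGroup Hp] [InnerProductSpace ℂ Hp] [CompleteSpace Hp]
    [NormedAddCommGroup H₀] [InnerProductSpace ℂ H₀] [CompleteSpace H₀]
    [NormedAddCommGroup Hm] [InnerProductSpace ℂ Hm] [CompleteSpace Hm]
    (Q : QuasiGelfandTriple Hp H₀ Hm) :
    ∀ x : H₀, ∃ (g : Q.im.domain) (v : Hp) (hv : v ∈ Q.ip.domain),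
      (∀ f : Q.ip.domain, ⟪Q.im g, Q.ip f⟫ = ⟪v, (f : Hp)⟫) ∧
      Q.im g + Q.ip ⟨v, hv⟩ = x := by
  intro x
  obtain ⟨f, u, hu, rfl⟩ := LinearPMap.exists_add_apply_eq_of_isClosed Q.ip_isClosed_s15 x
  obtain ⟨g, rfl⟩ := Q.ran_im u f hu
  exact ⟨g, f, f.2, hu, rfl⟩
end
end

section
/- Let T be a bounded, boundedly invertible operator on the pivot space H₀ of a quasi Gelfand triple (H₊, H₀, H₋). Then P₊ := T D₊ with norm ‖f‖_{Y₊} := ‖T⁻¹f‖₊ generates a quasi Gelfand triple (Y₊, H₀, Y₋), and the corresponding minus-side satisfies P₋ = (T*)⁻¹ D₋ with ‖g‖_{Y₋} = ‖T*g‖₋. -/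
open Filter Topology
open scoped ComplexInnerProductSpace

noncomputable section

/-- Let `T` be a bounded, boundedly invertible operator on the pivot
space `H₀` of a quasi Gelfand triple `(H₊, H₀, H₋)`.  Then `P₊ = T D₊` with norm
`‖f‖_{Y₊} = ‖T⁻¹ f‖₊` generates a quasi Gelfand triple `(Y₊, H₀, Y₋)` — i.e. the embedding of
`P₊` into `H₀` is closed as an operator from `Y₊ (≅ H₊)` to `H₀` — and the minus side
satisfies `P₋ = (T*)⁻¹ D₋` with `‖g‖_{Y₋} = ‖T* g‖₋`. -/
theorem stmt16 {Hp H₀ Hm : Type*}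
    [NormedAddCommGroup Hp] [InnerProductSpace ℂ Hp] [CompleteSpace Hp]
    [NormedAddCommGroup H₀] [InnerProductSpace ℂ H₀] [CompleteSpace H₀]
    [NormedAddCommGroup Hm] [InnerProductSpace ℂ Hm] [CompleteSpace Hm]
    (Q : QuasiGelfandTriple Hp H₀ Hm) (T : H₀ ≃L[ℂ] H₀) :
    -- closedness of the transported embedding (identifying `Y₊` with `H₊` via `T`):
    IsClosed {p : Hp × H₀ | ∃ f : Q.ip.domain, (f : Hp) = p.1 ∧ T (Q.ip f) = p.2} ∧
    -- `P₋ = (T*)⁻¹ D₋`: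
    (∀ g : H₀,
      (∃ C : ℝ, 0 ≤ C ∧ ∀ f : Q.ip.domain, ‖⟪g, T (Q.ip f)⟫‖ ≤ C * ‖(f : Hp)‖) ↔
        ∃ gm : Q.im.domain,
          Q.im gm = ContinuousLinearMap.adjoint (T : H₀ →L[ℂ] H₀) g) ∧
    -- `‖g‖_{Y₋} = ‖T* g‖₋`:
    (∀ (g : H₀) (gm : Q.im.domain),
      Q.im gm = ContinuousLinearMap.adjoint (T : H₀ →L[ℂ] H₀) g →
      sInf {C : ℝ | 0 ≤ C ∧ ∀ f : Q.ip.domain, ‖⟪g, T (Q.ip f)⟫‖ ≤ C * ‖(f : Hp)‖}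
        = ‖(gm : Hm)‖) := by
  have hadj : ∀ (g : H₀) (f : Q.ip.domain),
      ⟪g, T (Q.ip f)⟫ = ⟪ContinuousLinearMap.adjoint (T : H₀ →L[ℂ] H₀) g, Q.ip f⟫ := by
    intro g f
    rw [ContinuousLinearMap.adjoint_inner_left]
    rfl
  refine ⟨?_, ?_, ?_⟩
  · -- closedness: our set is the preimage of the closed graph under (p.1, T⁻¹ p.2)
    have : {p : Hp × H₀ | ∃ f : Q.ip.domain, (f : Hp) = p.1 ∧ T (Q.ip f) = p.2}
        = (fun p : Hp × H₀ => (p.1, T.symm p.2)) ⁻¹'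
          {p : Hp × H₀ | ∃ f : Q.ip.domain, (f : Hp) = p.1 ∧ Q.ip f = p.2} := by
      ext p
      simp only [Set.mem_setOf_eq, Set.mem_preimage]
      constructor
      · rintro ⟨f, hf1, hf2⟩
        exact ⟨f, hf1, by simp [← hf2]⟩
      · rintro ⟨f, hf1, hf2⟩
        refine ⟨f, hf1, ?_⟩
        have := congrArg T hf2
        simpa using this
    rw [this]
    exact Q.ip_closed.preimage (by continuity)
  · intro g
    set u := ContinuousLinearMap.adjoint (T : H₀ →L[ℂ] H₀) g with hu
    constructor
    · rintro ⟨C, hC0, hC⟩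
      -- build a bounded functional on the domain and extend (Hahn–Banach)
      set L : Q.ip.domain →ₗ[ℂ] ℂ := (innerSL ℂ u).toLinearMap.comp Q.ip.toFun with hL
      have hLb : ∀ f : Q.ip.domain, ‖L f‖ ≤ C * ‖f‖ := by
        intro f
        have := hC f
        rw [hadj g f] at this
        simpa [hL] using this
      let φ : Q.ip.domain →L[ℂ] ℂ := LinearMap.mkContinuous L C hLb
      obtain ⟨ψ, hψ, -⟩ := exists_extension_norm_eq (Q.ip.domain) φ
      set v : Hp := (InnerProductSpace.toDual ℂ Hp).symm ψ with hv
      refine Q.ran_im u v ?_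
      intro f
      have h1 : ⟪v, (f : Hp)⟫ = ψ f := InnerProductSpace.toDual_symm_apply
      rw [h1, hψ f]
      simp [φ, LinearMap.mkContinuous_apply, hL]
    · rintro ⟨gm, hgm⟩
      obtain ⟨v, hv1, hv2⟩ := Q.riesz gm
      refine ⟨‖v‖, norm_nonneg v, fun f => ?_⟩
      rw [hadj g f, ← hu, ← hgm, hv1 f]
      exact norm_inner_le_norm v (f : Hp)
  · intro g gm hgm
    obtain ⟨v, hv1, hv2⟩ := Q.riesz gm
    have hkey : ∀ f : Q.ip.domain, ⟪g, T (Q.ip f)⟫ = ⟪v, (f : Hp)⟫ := by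
      intro f
      rw [hadj g f, ← hgm, hv1 f]
    rw [← hv2]
    have hmem : ‖v‖ ∈ {C : ℝ | 0 ≤ C ∧ ∀ f : Q.ip.domain, ‖⟪g, T (Q.ip f)⟫‖ ≤ C * ‖(f : Hp)‖} :=
      ⟨norm_nonneg v, fun f => by rw [hkey f]; exact norm_inner_le_norm v (f : Hp)⟩
    have hlb : ∀ C ∈ {C : ℝ | 0 ≤ C ∧ ∀ f : Q.ip.domain,
        ‖⟪g, T (Q.ip f)⟫‖ ≤ C * ‖(f : Hp)‖}, ‖v‖ ≤ C := by
      rintro C ⟨hC0, hC⟩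
      -- density: the bound extends to all of Hp
      have hall : ∀ x : Hp, ‖⟪v, x⟫‖ ≤ C * ‖x‖ := by
        have hcl : IsClosed {x : Hp | ‖⟪v, x⟫‖ ≤ C * ‖x‖} := by
          apply isClosed_le
          · exact ((innerSL ℂ v).continuous).norm
          · exact continuous_const.mul continuous_norm
        have hsub : (Q.ip.domain : Set Hp) ⊆ {x : Hp | ‖⟪v, x⟫‖ ≤ C * ‖x‖} := by
          rintro x hx
          have := hC ⟨x, hx⟩
          rw [hkey ⟨x, hx⟩] at this
          exact this
        intro x
        have : (Set.univ : Set Hp) ⊆ {x : Hp | ‖⟪v, x⟫‖ ≤ C * ‖x‖} := by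
          rw [← Q.ip_dense_dom.closure_eq]
          exact hcl.closure_subset_iff.mpr hsub
        exact this (Set.mem_univ x)
      rcases eq_or_ne v 0 with h0 | h0
      · simpa [h0] using hC0
      · have := hall v
        rw [inner_self_eq_norm_sq_to_K (𝕜 := ℂ) v] at this
        have hn : 0 < ‖v‖ := norm_pos_iff.mpr h0
        have : ‖v‖ ^ 2 ≤ C * ‖v‖ := by
          simpa [norm_pow] using this
        nlinarith
    exact le_antisymm (csInf_le ⟨‖v‖, fun C hC => hlb C hC⟩ hmem)
      (le_csInf ⟨‖v‖, hmem⟩ hlb)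
end
end

section
/- Let M be a bounded, strictly positive (or more generally accretive and boundedly invertible) operator on the pivot space H₀ of a quasi Gelfand triple (H₊, H₀, H₋). Then V₁ = I, V₂ = M satisfy: (i) the operator [I|_{H₀∩H₊}, M|_{H₀∩H₋}] from H₊ × H₋ to H₀ is closed and surjective; (ii) ker[V₁ V₂] = {(x,y) : x = −My} is a dissipative linear relation on H₀; (iii) V₁V₂* + V₂V₁* = 2 Re M ≥ 0. -/
open Filter Topology
open scoped ComplexInnerProductSpace

noncomputable section

/-!
Closedness: for `w = ι₊ f + M ι₋ g`, coercivity of `M` and the duality bound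
`|⟨ι₋ g, ι₊ f⟩₀| ≤ ‖g‖₋ ‖f‖₊` give `c ‖ι₋ g‖² ≤ ‖w‖ ‖ι₋ g‖ + ‖g‖₋ ‖f‖₊`, so along a
convergent sequence in the graph `ι₋ g_n` is Cauchy, and closedness of `ι₊` and `ι₋` finishes.

Surjectivity: with `N = M^{-1/2}`, the operator `N ι₊` is closed, and projecting `(0, N z)` onto its
graph in `H₊ × H₀` yields `f ∈ D₊` with `⟨N² (z - ι₊ f), ι₊ f'⟩₀ = ⟨f, f'⟩₊` for all `f' ∈ D₊`.
Hence `N² (z - ι₊ f) ∈ dom ι₊* = ran ι₋`, say `= ι₋ g`, and then `z = ι₊ f + M ι₋ g`.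

Dissipativity and `V₁V₂* + V₂V₁* ≥ 0` are immediate from `Re ⟨M x, x⟩ ≥ 0`.
-/

namespace CFC

variable {A : Type*} [CStarAlgebra A] [PartialOrder A] [StarOrderedRing A]

lemma mul_rpow_neg_one_half_mul_self {a : A} (ha : IsStrictlyPositive a) :
    a * (a ^ (-(1 / 2) : ℝ) * a ^ (-(1 / 2) : ℝ)) = 1 := by
  nth_rw 1 [← rpow_one a]
  rw [← rpow_add ha.isUnit, ← rpow_add ha.isUnit]
  norm_num
  exact rpow_zero a

end CFC

namespace LinearPMap

variable {R E F G : Type*} [CommRing R] [AddCommGroup E] [AddCommGroup F] [AddCommGroup G]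
  [Module R E] [Module R F] [Module R G] [TopologicalSpace E] [TopologicalSpace F]
  [TopologicalSpace G]

theorem IsClosed.continuousLinearEquiv_compPMap {T : E →ₗ.[R] F} (hT : T.IsClosed)
    (e : F ≃L[R] G) : ((e : F →ₗ[R] G).compPMap T).IsClosed := by
  have hgraph : (((e : F →ₗ[R] G).compPMap T).graph : Set (E × G)) =
      Prod.map id e '' T.graph := by
    ext ⟨x, y⟩
    simp only [Set.mem_image, SetLike.mem_coe, mem_graph_iff]
    aesop
  rw [LinearPMap.IsClosed, hgraph]
  exact ((Homeomorph.refl E).prodCongr e.toHomeomorph).isClosedMap _ hT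

variable {E F : Type*} [NormedAddCommGroup E] [InnerProductSpace ℂ E] [CompleteSpace E]
  [NormedAddCommGroup F] [InnerProductSpace ℂ F] [CompleteSpace F]

theorem IsClosed.exists_inner_sub_apply_eq {T : E →ₗ.[ℂ] F} (hT : T.IsClosed) (u : F) :
    ∃ f : T.domain, ∀ f' : T.domain, ⟪u - T f, T f'⟫ = ⟪(f : E), f'⟫ := by
  let e := (WithLp.prodContinuousLinearEquiv 2 ℂ E F).symm
  let K : Submodule ℂ (WithLp 2 (E × F)) := T.graph.map (e : E × F →ₗ[ℂ] WithLp 2 (E × F))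
  have hK : _root_.IsClosed (K : Set (WithLp 2 (E × F))) := by
    rw [Submodule.map_coe]
    exact e.toHomeomorph.isClosedMap _ hT
  have : CompleteSpace K := hK.completeSpace_coe
  obtain ⟨_, ⟨p, hp, rfl⟩, q, hq, hdec⟩ := K.exists_add_mem_mem_orthogonal (e (0, u))
  obtain ⟨f, rfl⟩ : ∃ f : T.domain, ((f : E), T f) = p := by
    obtain ⟨f, hf1, hf2⟩ := T.mem_graph_iff.1 hp
    exact ⟨f, Prod.ext hf1 hf2⟩
  refine ⟨f, fun f' => ?_⟩
  have hq' : q = e (-f, u - T f) := by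
    rw [eq_sub_of_add_eq' hdec.symm]
    change e _ - e _ = _
    rw [← e.map_sub, Prod.mk_sub_mk, zero_sub]
  have h := (Submodule.mem_orthogonal' _ _).1 hq _ (Submodule.mem_map_of_mem (T.mem_graph f'))
  simp only [hq', e, WithLp.prodContinuousLinearEquiv_symm_apply,
    ContinuousLinearEquiv.toLinearEquiv_symm, LinearEquiv.coe_coe,
    ContinuousLinearEquiv.coe_symm_toLinearEquiv, WithLp.prod_inner_apply, inner_neg_left] at h
  linear_combination h

end LinearPMap

theorem ContinuousLinearMap.isStrictlyPositive_of_coercive {E : Type*} [NormedAddCommGroup E]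
    [InnerProductSpace ℂ E] [CompleteSpace E] {M : E →L[ℂ] E} (hM : IsSelfAdjoint M) {c : ℝ}
    (hc : 0 < c) (hcM : ∀ x : E, c * ‖x‖ ^ 2 ≤ (⟪M x, x⟫).re) : IsStrictlyPositive M := by
  refine (isStrictlyPositive_algebraMap (A := E →L[ℂ] E) hc).of_le ?_
  rw [ContinuousLinearMap.le_def, ContinuousLinearMap.isPositive_def']
  refine ⟨hM.sub (IsSelfAdjoint.algebraMap _ (.all c)), fun x => ?_⟩
  have hcx : (⟪(c : ℂ) • x, x⟫).re = c * ‖x‖ ^ 2 := by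
    rw [inner_smul_left, inner_self_eq_norm_sq_to_K]
    simp [← Complex.ofReal_pow]
  simp only [ContinuousLinearMap.reApplyInnerSelf, sub_apply, algebraMap_apply,
    ← Complex.coe_smul, inner_sub_left, RCLike.re_to_complex, Complex.sub_re, sub_nonneg, hcx]
  exact hcM x

namespace QuasiGelfandTriple

variable {Hp H₀ Hm : Type*}
  [NormedAddCommGroup Hp] [InnerProductSpace ℂ Hp] [CompleteSpace Hp]
  [NormedAddCommGroup H₀] [InnerProductSpace ℂ H₀] [CompleteSpace H₀]
  [NormedAddCommGroup Hm] [InnerProductSpace ℂ Hm] [CompleteSpace Hm]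
  (Q : QuasiGelfandTriple Hp H₀ Hm)

theorem ip_isClosed_s17 : Q.ip.IsClosed := by
  show IsClosed (Q.ip.graph : Set (Hp × H₀))
  convert Q.ip_closed using 1
  ext
  exact Q.ip.mem_graph_iff

theorem sq_norm_im_le {M : H₀ →L[ℂ] H₀} {c : ℝ} (hc : 0 < c)
    (hM : ∀ x : H₀, c * ‖x‖ ^ 2 ≤ (⟪M x, x⟫).re) (f : Q.ip.domain) (g : Q.im.domain) :
    ‖Q.im g‖ ^ 2 ≤ (‖Q.ip f + M (Q.im g)‖ / c) ^ 2 + 2 * (‖(g : Hm)‖ * ‖(f : Hp)‖) / c := by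
  set k := Q.im g
  set w := Q.ip f + M k
  have hMk : (⟪M k, k⟫).re = (⟪w, k⟫).re - (⟪Q.ip f, k⟫).re := by
    simp [w]
  have hw : (⟪w, k⟫).re ≤ ‖w‖ * ‖k‖ := by simpa using re_inner_le_norm (𝕜 := ℂ) w k
  have hf : -(⟪Q.ip f, k⟫).re ≤ ‖(g : Hm)‖ * ‖(f : Hp)‖ := by
    refine (neg_le_abs _).trans ((Complex.abs_re_le_norm _).trans ?_)
    rw [norm_inner_symm]
    exact Q.norm_inner_im_ip_le g f
  have hck := hM k
  rw [div_pow, div_add_div _ _ (by positivity) hc.ne', le_div_iff₀ (by positivity)]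
  nlinarith [sq_nonneg (‖w‖ - c * ‖k‖)]

theorem exists_ip_add_im_eq {M N : H₀ →L[ℂ] H₀} (hN : IsSelfAdjoint N) (hNu : IsUnit N)
    (hMN : M * (N * N) = 1) (z : H₀) :
    ∃ (f : Q.ip.domain) (g : Q.im.domain), Q.ip f + M (Q.im g) = z := by
  let e := ContinuousLinearEquiv.unitsEquiv ℂ H₀ hNu.unit
  obtain ⟨f, hf⟩ : ∃ f : Q.ip.domain,
      ∀ f' : Q.ip.domain, ⟪N z - N (Q.ip f), N (Q.ip f')⟫ = ⟪(f : Hp), f'⟫ :=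
    (Q.ip_isClosed_s17.continuousLinearEquiv_compPMap e).exists_inner_sub_apply_eq (N z)
  have hran : ∀ f' : Q.ip.domain, ⟪N (N (z - Q.ip f)), Q.ip f'⟫ = ⟪(f : Hp), f'⟫ := by
    intro f'
    rw [← hf f', ← map_sub]
    exact hN.isSymmetric _ _
  obtain ⟨g, hg⟩ := Q.ran_im _ _ hran
  refine ⟨f, g, ?_⟩
  have hMN' : M (N (N (z - Q.ip f))) = z - Q.ip f := DFunLike.congr_fun hMN _
  rw [hg, hMN', add_sub_cancel]

theorem isClosed_ip_add_im {M : H₀ →L[ℂ] H₀} {c : ℝ} (hc : 0 < c)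
    (hM : ∀ x : H₀, c * ‖x‖ ^ 2 ≤ (⟪M x, x⟫).re) :
    IsClosed {p : (Hp × Hm) × H₀ | ∃ (f : Q.ip.domain) (g : Q.im.domain),
        (f : Hp) = p.1.1 ∧ (g : Hm) = p.1.2 ∧ Q.ip f + M (Q.im g) = p.2} := by
  refine IsSeqClosed.isClosed fun x p hx hlim => ?_
  choose f g hf hg hw using hx
  have hfp : Tendsto (fun n => (f n : Hp)) atTop (𝓝 p.1.1) := by
    simpa only [hf] using hlim.fst_nhds.fst_nhds
  have hgp : Tendsto (fun n => (g n : Hm)) atTop (𝓝 p.1.2) := by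
    simpa only [hg] using hlim.fst_nhds.snd_nhds
  have hwp : Tendsto (fun n => Q.ip (f n) + M (Q.im (g n))) atTop (𝓝 p.2) := by
    simpa only [hw] using hlim.snd_nhds
  have hk : CauchySeq fun n => Q.im (g n) := by
    have hf0 := cauchySeq_iff_tendsto_dist_atTop_0.1 hfp.cauchySeq
    have hg0 := cauchySeq_iff_tendsto_dist_atTop_0.1 hgp.cauchySeq
    have hw0 := cauchySeq_iff_tendsto_dist_atTop_0.1 hwp.cauchySeq
    refine cauchySeq_iff_tendsto_dist_atTop_0.2 (squeeze_zero (fun _ => dist_nonneg)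
      (fun nm => Real.le_sqrt_of_sq_le ?_)
      (by simpa using
        (((hw0.div_const c).pow 2).add (((hg0.mul hf0).const_mul 2).div_const c)).sqrt))
    simpa [dist_eq_norm, LinearPMap.map_sub, add_sub_add_comm] using
      Q.sq_norm_im_le hc hM (f nm.1 - f nm.2) (g nm.1 - g nm.2)
  obtain ⟨k, hk⟩ := cauchySeq_tendsto_of_complete hk
  have hip : Tendsto (fun n => Q.ip (f n)) atTop (𝓝 (p.2 - M k)) := by
    simpa using hwp.sub ((M.continuous.tendsto k).comp hk)
  obtain ⟨f₀, hf₀, hf₀'⟩ := Q.ip_closed.mem_of_tendsto (hfp.prodMk_nhds hip)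
    (Eventually.of_forall fun n => ⟨f n, rfl, rfl⟩)
  obtain ⟨g₀, hg₀, hg₀'⟩ := Q.im_closed.mem_of_tendsto (hgp.prodMk_nhds hk)
    (Eventually.of_forall fun n => ⟨g n, rfl, rfl⟩)
  exact ⟨f₀, g₀, hf₀, hg₀, by rw [hf₀', hg₀', sub_add_cancel]⟩

end QuasiGelfandTriple

/-- Let `M` be a bounded, strictly positive operator on the pivot space
`H₀` of a quasi Gelfand triple `(H₊, H₀, H₋)`.  Then `V₁ = I`, `V₂ = M` satisfy:
(i) the operator `[I|_{D₊}, M|_{D₋}] : H₊ × H₋ → H₀` is closed and surjective;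
(ii) `ker [V₁ V₂] = {(x,y) : x = −My}` is a dissipative linear relation on `H₀`;
(iii) `V₁V₂* + V₂V₁* = 2 Re M ≥ 0`. -/
theorem stmt17 {Hp H₀ Hm : Type*}
    [NormedAddCommGroup Hp] [InnerProductSpace ℂ Hp] [CompleteSpace Hp]
    [NormedAddCommGroup H₀] [InnerProductSpace ℂ H₀] [CompleteSpace H₀]
    [NormedAddCommGroup Hm] [InnerProductSpace ℂ Hm] [CompleteSpace Hm]
    (Q : QuasiGelfandTriple Hp H₀ Hm)
    (M : H₀ →L[ℂ] H₀) (hMsa : IsSelfAdjoint M)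
    (hMpos : ∃ c : ℝ, 0 < c ∧ ∀ x : H₀, c * ‖x‖ ^ 2 ≤ (⟪M x, x⟫).re) :
    -- (i) `[I|_{D₊}, M|_{D₋}]` is closed and surjective:
    (IsClosed {p : (Hp × Hm) × H₀ | ∃ (f : Q.ip.domain) (g : Q.im.domain),
        (f : Hp) = p.1.1 ∧ (g : Hm) = p.1.2 ∧ Q.ip f + M (Q.im g) = p.2} ∧
      ∀ z : H₀, ∃ (f : Q.ip.domain) (g : Q.im.domain), Q.ip f + M (Q.im g) = z) ∧
    -- (ii) the kernel relation is dissipative: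
    (∀ x y : H₀, x = -(M y) → (⟪x, y⟫).re ≤ 0) ∧
    -- (iii) `V₁V₂* + V₂V₁* ≥ 0`:
    (∀ x : H₀, 0 ≤ (⟪(ContinuousLinearMap.adjoint M + M) x, x⟫).re) := by
  obtain ⟨c, hc, hcM⟩ := hMpos
  have hacc : ∀ x : H₀, 0 ≤ (⟪M x, x⟫).re := fun x =>
    (by positivity : 0 ≤ c * ‖x‖ ^ 2).trans (hcM x)
  have hM : IsStrictlyPositive M := ContinuousLinearMap.isStrictlyPositive_of_coercive hMsa hc hcM
  have hN : IsStrictlyPositive (M ^ (-(1 / 2) : ℝ)) := hM.rpow _ _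
  refine ⟨⟨Q.isClosed_ip_add_im hc hcM, Q.exists_ip_add_im_eq hN.isSelfAdjoint hN.isUnit
    (CFC.mul_rpow_neg_one_half_mul_self hM)⟩, fun x y hxy => ?_, fun x => ?_⟩
  · rw [hxy, inner_neg_left, Complex.neg_re, neg_nonpos]
    exact hacc y
  · rw [add_apply, inner_add_left, Complex.add_re,
      ContinuousLinearMap.adjoint_inner_left]
    rw [← inner_conj_symm x (M x), Complex.conj_re]
    linarith [hacc x]
end
end
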